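/- arXiv:math/0406574 — 4 statements merged into one kernel-verified Lean document; each statement's English description precedes it below -/
import Mathlib

section
/- Let n ≥ 1 and let λ, μ be dominant weights of type B_n such that λ − μ is a nonnegative integral combination of the positive roots of B_n. Then the Kostka–Foulkes polynomial K^{B_n}_{λ,μ}(q) is a monic polynomial in q of degree Σ_{i=1}^n i·(λ_i − μ_i). -/
open scoped BigOperators

noncomputable section

/-- The `q`-analogue of Kostant's partition function attached to the finite set `R`
of positive roots: the coefficient of `q^k` is the number of families
`(m_α)_{α ∈ R}` of nonnegative integers with `∑ m_α = k` and `∑ m_α • α = β`. -/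
def kostantQ {n : ℕ} (R : Finset (Fin n → ℚ)) (β : Fin n → ℚ) : PowerSeries ℤ :=
  PowerSeries.mk fun k =>
    (Nat.card {m : {α // α ∈ R} → ℕ //
      (∑ α, m α) = k ∧ (∑ α, (m α : ℚ) • (α : Fin n → ℚ)) = β} : ℤ)

/-- Positive roots of type `D_n` : `e_i - e_j` and `e_i + e_j` for `j < i`. -/
def rootsD (n : ℕ) : Finset (Fin n → ℚ) :=
  ((Finset.univ : Finset (Fin n × Fin n)).filter fun p => p.2 < p.1).image
      (fun p => Pi.single p.1 (1 : ℚ) - Pi.single p.2 1) ∪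
  ((Finset.univ : Finset (Fin n × Fin n)).filter fun p => p.2 < p.1).image
      (fun p => Pi.single p.1 (1 : ℚ) + Pi.single p.2 1)

/-- Positive roots of type `B_n`. -/
def rootsB (n : ℕ) : Finset (Fin n → ℚ) :=
  rootsD n ∪ (Finset.univ : Finset (Fin n)).image fun i => Pi.single i (1 : ℚ)

/-- Positive roots of type `C_n`. -/
def rootsC (n : ℕ) : Finset (Fin n → ℚ) :=
  rootsD n ∪ (Finset.univ : Finset (Fin n)).image fun i => Pi.single i (2 : ℚ)

/-- Positive roots of type `A_{n-1}` : `e_i - e_j` for `j < i`. -/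
def rootsA (n : ℕ) : Finset (Fin n → ℚ) :=
  ((Finset.univ : Finset (Fin n × Fin n)).filter fun p => p.2 < p.1).image
      fun p => Pi.single p.1 (1 : ℚ) - Pi.single p.2 1

/-- `ρ` of type `B_n` : `e_i`-coordinate `i - 1/2` (`0`-based index `i ↦ i + 1/2`). -/
def rhoB (n : ℕ) : Fin n → ℚ := fun i => ((i : ℕ) : ℚ) + 1/2

/-- `ρ` of type `C_n` : `e_i`-coordinate `i`. -/
def rhoC (n : ℕ) : Fin n → ℚ := fun i => ((i : ℕ) : ℚ) + 1

/-- `ρ` of type `D_n` : `e_i`-coordinate `i - 1`. -/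
def rhoD (n : ℕ) : Fin n → ℚ := fun i => ((i : ℕ) : ℚ)

/-- `ρ` of type `A_{n-1}` : `e_i`-coordinate `i - 1`. -/
def rhoA (n : ℕ) : Fin n → ℚ := fun i => ((i : ℕ) : ℚ)

/-- The signed permutation `(σ, ε)` acting on a weight: it maps `e_j` to `± e_{σ j}`. -/
def wAct {n : ℕ} (σ : Equiv.Perm (Fin n)) (ε : Fin n → Bool) (β : Fin n → ℚ) :
    Fin n → ℚ := fun i => (if ε i then -1 else 1) * β (σ⁻¹ i)

/-- The determinant (sign) of the signed permutation `(σ, ε)`. -/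
def wDet {n : ℕ} (σ : Equiv.Perm (Fin n)) (ε : Fin n → Bool) : ℤ :=
  (Equiv.Perm.sign σ : ℤ) * ∏ i, (if ε i then (-1 : ℤ) else 1)

/-- Kostka-Foulkes polynomial of type `B_n`, as a power series in `q`. -/
def KB (n : ℕ) (lam mu : Fin n → ℚ) : PowerSeries ℤ :=
  ∑ σ : Equiv.Perm (Fin n), ∑ ε : Fin n → Bool,
    wDet σ ε • kostantQ (rootsB n) (wAct σ ε (lam + rhoB n) - (mu + rhoB n))

/-- Kostka-Foulkes polynomial of type `C_n`, as a power series in `q`. -/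
def KC (n : ℕ) (lam mu : Fin n → ℚ) : PowerSeries ℤ :=
  ∑ σ : Equiv.Perm (Fin n), ∑ ε : Fin n → Bool,
    wDet σ ε • kostantQ (rootsC n) (wAct σ ε (lam + rhoC n) - (mu + rhoC n))

/-- Kostka-Foulkes polynomial of type `D_n`, as a power series in `q` (the Weyl group
consists of the signed permutations with an even number of sign changes). -/
def KD (n : ℕ) (lam mu : Fin n → ℚ) : PowerSeries ℤ :=
  ∑ σ : Equiv.Perm (Fin n), ∑ ε : Fin n → Bool,
    if (∏ i, (if ε i then (-1 : ℤ) else 1)) = 1 then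
      wDet σ ε • kostantQ (rootsD n) (wAct σ ε (lam + rhoD n) - (mu + rhoD n))
    else 0

/-- Kostka-Foulkes polynomial of type `A_{n-1}`, as a power series in `q`. -/
def KA (n : ℕ) (lam mu : Fin n → ℚ) : PowerSeries ℤ :=
  ∑ σ : Equiv.Perm (Fin n),
    (Equiv.Perm.sign σ : ℤ) •
      kostantQ (rootsA n) ((fun i => (lam + rhoA n) (σ⁻¹ i)) - (mu + rhoA n))

/-- Dominant weight of type `B_n` : `λ_n ≥ ⋯ ≥ λ_1 ≥ 0`, all coordinates in `ℤ`
or all in `ℤ + 1/2`. -/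
def DominantB {n : ℕ} (lam : Fin n → ℚ) : Prop :=
  Monotone lam ∧ (∀ i, 0 ≤ lam i) ∧
    ((∀ i, ∃ z : ℤ, lam i = z) ∨ (∀ i, ∃ z : ℤ, lam i = z + 1/2))

/-- Dominant weight of type `C_n` : `λ_n ≥ ⋯ ≥ λ_1 ≥ 0`, integer coordinates. -/
def DominantC {n : ℕ} (lam : Fin n → ℚ) : Prop :=
  Monotone lam ∧ (∀ i, 0 ≤ lam i) ∧ ∀ i, ∃ z : ℤ, lam i = z

/-- Dominant weight of type `D_n` : `λ_n ≥ ⋯ ≥ λ_2 ≥ |λ_1|`, all coordinates in `ℤ`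
or all in `ℤ + 1/2`. -/
def DominantD {n : ℕ} (lam : Fin n → ℚ) : Prop :=
  (∀ i j : Fin n, i ≤ j → 0 < (i : ℕ) → lam i ≤ lam j) ∧
  (∀ h : 0 < n, ∀ j : Fin n, 0 < (j : ℕ) → |lam ⟨0, h⟩| ≤ lam j) ∧
  ((∀ i, ∃ z : ℤ, lam i = z) ∨ (∀ i, ∃ z : ℤ, lam i = z + 1/2))

/-- Restriction of a weight of rank `n` to the first `n - 1` coordinates
(i.e. forgetting the `e_n`-coordinate). -/
def restrict1 {n : ℕ} (lam : Fin n → ℚ) : Fin (n - 1) → ℚ :=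
  fun i => lam ⟨(i : ℕ), by have := i.2; omega⟩

/-- Pieri number `b^λ_{γ,r}` of type `B_n`. -/
def bPieri {m : ℕ} (γ lam : Fin m → ℚ) (r : ℕ) : ℕ :=
  Nat.card {t : (Fin m → ℕ) × (Fin m → ℕ) × Bool //
    ((cond t.2.2 1 0) + ∑ i, (t.1 i + t.2.1 i)) = r ∧
    (∀ i, ((t.2.1 i : ℚ) - (t.1 i : ℚ)) = lam i - γ i) ∧
    (∀ i : Fin m, ∀ h : (i : ℕ) + 1 < m,
      lam i ≤ lam ⟨(i : ℕ) + 1, h⟩ - (t.2.1 ⟨(i : ℕ) + 1, h⟩ : ℚ)) ∧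
    (∀ i : Fin m, ∀ h : (i : ℕ) + 1 < m,
      lam i + (t.1 i : ℚ) - (t.2.1 i : ℚ) ≤
        lam ⟨(i : ℕ) + 1, h⟩ - (t.2.1 ⟨(i : ℕ) + 1, h⟩ : ℚ)) ∧
    (∀ h : 0 < m,
      if t.2.2 then (0 : ℚ) < lam ⟨0, h⟩ - (t.2.1 ⟨0, h⟩ : ℚ)
      else (0 : ℚ) ≤ lam ⟨0, h⟩ - (t.2.1 ⟨0, h⟩ : ℚ))}

/-- Pieri number `c^λ_{γ,r}` of type `C_n`. -/
def cPieri {m : ℕ} (γ lam : Fin m → ℚ) (r : ℕ) : ℕ :=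
  Nat.card {t : (Fin m → ℕ) × (Fin m → ℕ) //
    (∑ i, (t.1 i + t.2 i)) = r ∧
    (∀ i, ((t.2 i : ℚ) - (t.1 i : ℚ)) = lam i - γ i) ∧
    (∀ i : Fin m, ∀ h : (i : ℕ) + 1 < m,
      lam i ≤ lam ⟨(i : ℕ) + 1, h⟩ - (t.2 ⟨(i : ℕ) + 1, h⟩ : ℚ)) ∧
    (∀ i : Fin m, ∀ h : (i : ℕ) + 1 < m,
      lam i + (t.1 i : ℚ) - (t.2 i : ℚ) ≤
        lam ⟨(i : ℕ) + 1, h⟩ - (t.2 ⟨(i : ℕ) + 1, h⟩ : ℚ)) ∧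
    (∀ h : 0 < m, (0 : ℚ) ≤ lam ⟨0, h⟩ - (t.2 ⟨0, h⟩ : ℚ))}

/-- Pieri number `d^λ_{γ,r}` of type `D_n`. -/
def dPieri {m : ℕ} (γ lam : Fin m → ℚ) (r : ℕ) : ℕ :=
  Nat.card {t : (Fin m → ℕ) × (Fin m → ℕ) //
    (∀ h : 0 < m, min (t.1 ⟨0, h⟩) (t.2 ⟨0, h⟩) = 0) ∧
    (∑ i, (t.1 i + t.2 i)) = r ∧
    (∀ i, ((t.2 i : ℚ) - (t.1 i : ℚ)) = lam i - γ i) ∧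
    (∀ h : 1 < m,
      (t.1 ⟨0, by omega⟩ = 0 →
        lam ⟨0, by omega⟩ ≤ lam ⟨1, h⟩ - (t.2 ⟨1, h⟩ : ℚ)) ∧
      (0 < t.1 ⟨0, by omega⟩ →
        -lam ⟨0, by omega⟩ ≤ lam ⟨1, h⟩ - (t.2 ⟨1, h⟩ : ℚ))) ∧
    (∀ i : Fin m, 1 ≤ (i : ℕ) → ∀ h : (i : ℕ) + 1 < m,
      lam i ≤ lam ⟨(i : ℕ) + 1, h⟩ - (t.2 ⟨(i : ℕ) + 1, h⟩ : ℚ)) ∧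
    (∀ i : Fin m, 1 ≤ (i : ℕ) → ∀ h : (i : ℕ) + 1 < m,
      lam i + (t.1 i : ℚ) - (t.2 i : ℚ) ≤
        lam ⟨(i : ℕ) + 1, h⟩ - (t.2 ⟨(i : ℕ) + 1, h⟩ : ℚ)) ∧
    (∀ h : 1 < m,
      (t.1 ⟨0, by omega⟩ = 0 → 0 ≤ γ ⟨0, by omega⟩ →
        lam ⟨0, by omega⟩ - (t.2 ⟨0, by omega⟩ : ℚ) ≤ lam ⟨1, h⟩ - (t.2 ⟨1, h⟩ : ℚ)) ∧
      (t.2 ⟨0, by omega⟩ = 0 → 0 ≤ γ ⟨0, by omega⟩ →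
        lam ⟨0, by omega⟩ + (t.1 ⟨0, by omega⟩ : ℚ) ≤ lam ⟨1, h⟩ - (t.2 ⟨1, h⟩ : ℚ)) ∧
      (t.2 ⟨0, by omega⟩ = 0 → γ ⟨0, by omega⟩ < 0 →
        -lam ⟨0, by omega⟩ - (t.1 ⟨0, by omega⟩ : ℚ) ≤ lam ⟨1, h⟩ - (t.2 ⟨1, h⟩ : ℚ)) ∧
      (t.1 ⟨0, by omega⟩ = 0 → γ ⟨0, by omega⟩ < 0 →
        -lam ⟨0, by omega⟩ + (t.2 ⟨0, by omega⟩ : ℚ) ≤ lam ⟨1, h⟩ - (t.2 ⟨1, h⟩ : ℚ)))}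

/-- The monomial `x^β = ∏ y_i ^ (2 β_i)` in the Laurent polynomial ring
`ℤ[y_1^{±1}, …, y_n^{±1}]`, realized as the group algebra of `ℤ^n`. -/
def xpow {n : ℕ} (β : Fin n → ℚ) : AddMonoidAlgebra ℤ (Fin n → ℤ) :=
  AddMonoidAlgebra.single (fun i => ⌊2 * β i⌋) 1

/-- The Weyl alternant `a_β = ∑_{σ ∈ W_{B_n}} det σ · x^{σ β}` of type `B_n`. -/
def altB {n : ℕ} (β : Fin n → ℚ) : AddMonoidAlgebra ℤ (Fin n → ℤ) :=
  ∑ σ : Equiv.Perm (Fin n), ∑ ε : Fin n → Bool, wDet σ ε • xpow (wAct σ ε β)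

/-- The Weyl alternant `a_β = ∑_{σ ∈ W_{D_n}} det σ · x^{σ β}` of type `D_n`. -/
def altD {n : ℕ} (β : Fin n → ℚ) : AddMonoidAlgebra ℤ (Fin n → ℤ) :=
  ∑ σ : Equiv.Perm (Fin n), ∑ ε : Fin n → Bool,
    if (∏ i, (if ε i then (-1 : ℤ) else 1)) = 1 then wDet σ ε • xpow (wAct σ ε β) else 0

end

noncomputable section
namespace KFaux

variable {n : ℕ}

/-- Weighted coordinate sum `∑ i, c i * γ i`. -/
def wsum (c : Fin n → ℚ) (γ : Fin n → ℚ) : ℚ := ∑ i, c i * γ i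

/-- The height weights `i ↦ i + 1`. -/
def hwt : Fin n → ℚ := fun i => ((i : ℕ) : ℚ) + 1

/-- Indicator weights of `{i : j ≤ i}`. -/
def lwt (j : ℕ) : Fin n → ℚ := fun i => if j ≤ (i : ℕ) then 1 else 0

/-- The simple roots: `sRt 0 = e_0`, `sRt j = e_j - e_{j-1}`. -/
def sRt (j : Fin n) : Fin n → ℚ :=
  Pi.single j 1 -
    (if (j : ℕ) = 0 then 0 else
      Pi.single (⟨(j : ℕ) - 1, Nat.lt_of_le_of_lt (Nat.sub_le _ _) j.2⟩ : Fin n) 1)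

lemma wsum_add (c γ δ : Fin n → ℚ) : wsum c (γ + δ) = wsum c γ + wsum c δ := by
  simp [wsum, Pi.add_apply, mul_add, Finset.sum_add_distrib]

lemma wsum_sub (c γ δ : Fin n → ℚ) : wsum c (γ - δ) = wsum c γ - wsum c δ := by
  simp [wsum, Pi.sub_apply, mul_sub, Finset.sum_sub_distrib]

lemma wsum_single (c : Fin n → ℚ) (i : Fin n) : wsum c (Pi.single i 1) = c i := by
  rw [wsum, Finset.sum_eq_single i (fun b _ hb => by simp [Pi.single_apply, hb]) (by simp)]
  simp

lemma wsum_sum {ι : Type*} (c : Fin n → ℚ) (s : Finset ι) (a : ι → ℕ) (f : ι → Fin n → ℚ) :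
    wsum c (∑ x ∈ s, (a x : ℚ) • f x) = ∑ x ∈ s, (a x : ℚ) * wsum c (f x) := by
  unfold wsum
  have h1 : ∀ i : Fin n, c i * (∑ x ∈ s, (a x : ℚ) • f x) i
      = ∑ x ∈ s, (a x : ℚ) * (c i * f x i) := by
    intro i
    rw [Finset.sum_apply, Finset.mul_sum]
    exact Finset.sum_congr rfl fun x _ => by simp [Pi.smul_apply, smul_eq_mul]; ring
  rw [Finset.sum_congr rfl fun i _ => h1 i, Finset.sum_comm]
  exact Finset.sum_congr rfl fun x _ => by rw [Finset.mul_sum]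

lemma mem_rootsB_elim {α : Fin n → ℚ} (hα : α ∈ rootsB n) :
    (∃ i j : Fin n, (j : ℕ) < (i : ℕ) ∧ α = Pi.single i 1 - Pi.single j 1) ∨
    (∃ i j : Fin n, (j : ℕ) < (i : ℕ) ∧ α = Pi.single i 1 + Pi.single j 1) ∨
    (∃ i : Fin n, α = Pi.single i 1) := by
  simp only [rootsB, rootsD, Finset.mem_union, Finset.mem_image, Finset.mem_filter,
    Finset.mem_univ, true_and] at hα
  rcases hα with ((⟨p, hp, rfl⟩ | ⟨p, hp, rfl⟩) | ⟨i, rfl⟩)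
  · exact Or.inl ⟨p.1, p.2, hp, rfl⟩
  · exact Or.inr (Or.inl ⟨p.1, p.2, hp, rfl⟩)
  · exact Or.inr (Or.inr ⟨i, rfl⟩)

lemma sRt_mem (j : Fin n) : sRt j ∈ rootsB n := by
  rw [rootsB, Finset.mem_union]
  by_cases hj : (j : ℕ) = 0
  · right
    simp only [Finset.mem_image, Finset.mem_univ, true_and]
    exact ⟨j, by rw [sRt, if_pos hj, sub_zero]⟩
  · left
    rw [rootsD, Finset.mem_union]
    left
    simp only [Finset.mem_image, Finset.mem_filter, Finset.mem_univ, true_and]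
    refine ⟨(j, ⟨(j : ℕ) - 1, Nat.lt_of_le_of_lt (Nat.sub_le _ _) j.2⟩), ?_, ?_⟩
    · show (⟨(j : ℕ) - 1, _⟩ : Fin n) < j
      rw [Fin.lt_def]
      show (j : ℕ) - 1 < (j : ℕ)
      omega
    · rw [sRt, if_neg hj]

lemma sRt_apply (j i : Fin n) :
    sRt j i = (if i = j then 1 else 0) - (if (i : ℕ) + 1 = (j : ℕ) then 1 else 0) := by
  rw [sRt]
  by_cases hj : (j : ℕ) = 0
  · rw [if_pos hj, sub_zero, Pi.single_apply, if_neg (show ¬((i : ℕ) + 1 = (j : ℕ)) by omega),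
      sub_zero]
  · rw [if_neg hj, Pi.sub_apply, Pi.single_apply, Pi.single_apply]
    congr 1
    have h : (i = (⟨(j : ℕ) - 1, Nat.lt_of_le_of_lt (Nat.sub_le _ _) j.2⟩ : Fin n))
        ↔ ((i : ℕ) + 1 = (j : ℕ)) := by
      rw [Fin.ext_iff]
      simp only []
      omega
    rw [if_congr h rfl rfl]

lemma sRt_inj : Function.Injective (sRt (n := n)) := by
  intro a b h
  by_contra hab
  have h1 := congrFun h a
  rw [sRt_apply, sRt_apply, if_pos rfl, if_neg (show ¬((a : ℕ) + 1 = (a : ℕ)) by omega),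
    if_neg hab] at h1
  split_ifs at h1 <;> norm_num at h1

lemma one_le_hwt_root {α : Fin n → ℚ} (hα : α ∈ rootsB n) : 1 ≤ wsum hwt α := by
  rcases mem_rootsB_elim hα with ⟨i, j, hij, rfl⟩ | ⟨i, j, hij, rfl⟩ | ⟨i, rfl⟩
  · rw [wsum_sub, wsum_single, wsum_single]
    have h1 : (j : ℕ) + 1 ≤ (i : ℕ) := hij
    have h2 : ((j : ℕ) : ℚ) + 1 ≤ ((i : ℕ) : ℚ) := by exact_mod_cast h1
    simp only [hwt]; linarith
  · rw [wsum_add, wsum_single, wsum_single]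
    have h1 : (0 : ℚ) ≤ ((i : ℕ) : ℚ) := Nat.cast_nonneg _
    have h2 : (0 : ℚ) ≤ ((j : ℕ) : ℚ) := Nat.cast_nonneg _
    simp only [hwt]; linarith
  · rw [wsum_single]
    have h1 : (0 : ℚ) ≤ ((i : ℕ) : ℚ) := Nat.cast_nonneg _
    simp only [hwt]; linarith

lemma root_hwt_eq_one {α : Fin n → ℚ} (hα : α ∈ rootsB n) (h1 : wsum hwt α = 1) :
    ∃ j : Fin n, α = sRt j := by
  rcases mem_rootsB_elim hα with ⟨i, j, hij, rfl⟩ | ⟨i, j, hij, rfl⟩ | ⟨i, rfl⟩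
  · refine ⟨i, ?_⟩
    rw [wsum_sub, wsum_single, wsum_single] at h1
    simp only [hwt] at h1
    have hji : (i : ℕ) = (j : ℕ) + 1 := by
      have h2 : ((i : ℕ) : ℚ) = ((j : ℕ) : ℚ) + 1 := by linarith
      exact_mod_cast h2
    funext k
    rw [sRt_apply, Pi.sub_apply, Pi.single_apply, Pi.single_apply]
    congr 1
    have h3 : (k = j) ↔ ((k : ℕ) + 1 = (i : ℕ)) := by rw [Fin.ext_iff]; omega
    rw [if_congr h3 rfl rfl]
  · exfalso
    rw [wsum_add, wsum_single, wsum_single] at h1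
    simp only [hwt] at h1
    have h2 : (0 : ℚ) ≤ ((i : ℕ) : ℚ) := Nat.cast_nonneg _
    have h3 : (0 : ℚ) ≤ ((j : ℕ) : ℚ) := Nat.cast_nonneg _
    linarith
  · refine ⟨i, ?_⟩
    rw [wsum_single] at h1
    simp only [hwt] at h1
    have hi0 : (i : ℕ) = 0 := by
      have h2 : ((i : ℕ) : ℚ) = 0 := by linarith
      exact_mod_cast h2
    funext k
    rw [sRt_apply, Pi.single_apply, if_neg (show ¬((k : ℕ) + 1 = (i : ℕ)) by omega), sub_zero]

lemma wsum_hwt_sRt (j : Fin n) : wsum hwt (sRt j) = 1 := by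
  rw [sRt]
  by_cases hj : (j : ℕ) = 0
  · rw [if_pos hj, sub_zero, wsum_single]
    simp [hwt, hj]
  · rw [if_neg hj, wsum_sub, wsum_single, wsum_single]
    show ((j : ℕ) : ℚ) + 1 - ((((j : ℕ) - 1 : ℕ) : ℚ) + 1) = 1
    rw [Nat.cast_sub (by omega : 1 ≤ (j : ℕ))]
    push_cast
    ring

lemma wsum_lwt_sRt (j t : Fin n) : wsum (lwt (j : ℕ)) (sRt t) = if t = j then 1 else 0 := by
  rw [sRt]
  by_cases ht : (t : ℕ) = 0
  · rw [if_pos ht, sub_zero, wsum_single]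
    show (if (j : ℕ) ≤ (t : ℕ) then (1 : ℚ) else 0) = _
    have h : ((j : ℕ) ≤ (t : ℕ)) ↔ (t = j) := by rw [Fin.ext_iff]; omega
    rw [if_congr h rfl rfl]
  · rw [if_neg ht, wsum_sub, wsum_single, wsum_single]
    show (if (j : ℕ) ≤ (t : ℕ) then (1 : ℚ) else 0)
        - (if (j : ℕ) ≤ (t : ℕ) - 1 then (1 : ℚ) else 0) = _
    by_cases h1 : t = j
    · have hv : (t : ℕ) = (j : ℕ) := by rw [h1]
      rw [if_pos (by omega), if_neg (by omega), if_pos h1]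
      norm_num
    · have hv : (t : ℕ) ≠ (j : ℕ) := fun hc => h1 (Fin.ext hc)
      rw [if_neg h1]
      by_cases h2 : (j : ℕ) ≤ (t : ℕ)
      · rw [if_pos h2, if_pos (by omega)]; norm_num
      · rw [if_neg h2, if_neg (by omega)]; norm_num

lemma root_lwt_nat (j : ℕ) {α : Fin n → ℚ} (hα : α ∈ rootsB n) :
    ∃ k : ℕ, (k : ℚ) = wsum (lwt j) α := by
  rcases mem_rootsB_elim hα with ⟨i, t, hit, rfl⟩ | ⟨i, t, hit, rfl⟩ | ⟨i, rfl⟩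
  · rw [wsum_sub, wsum_single, wsum_single]
    show ∃ k : ℕ, (k : ℚ) = (if j ≤ (i : ℕ) then 1 else 0) - (if j ≤ (t : ℕ) then 1 else 0)
    split_ifs with h1 h2
    · exact ⟨0, by norm_num⟩
    · exact ⟨1, by norm_num⟩
    · exact absurd (by omega : j ≤ (i : ℕ)) h1
    · exact ⟨0, by norm_num⟩
  · rw [wsum_add, wsum_single, wsum_single]
    show ∃ k : ℕ, (k : ℚ) = (if j ≤ (i : ℕ) then 1 else 0) + (if j ≤ (t : ℕ) then 1 else 0)
    split_ifs with h1 h2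
    · exact ⟨2, by norm_num⟩
    · exact ⟨1, by norm_num⟩
    · exact absurd (by omega : j ≤ (i : ℕ)) h1
    · exact ⟨0, by norm_num⟩
  · rw [wsum_single]
    show ∃ k : ℕ, (k : ℚ) = (if j ≤ (i : ℕ) then 1 else 0)
    split_ifs
    · exact ⟨1, by norm_num⟩
    · exact ⟨0, by norm_num⟩

lemma sum_eq_val (g : Fin n → ℚ) (v : ℕ) :
    (∑ k : Fin n, if (k : ℕ) = v then g k else 0) = if h : v < n then g ⟨v, h⟩ else 0 := by
  by_cases h : v < n
  · rw [dif_pos h, Finset.sum_eq_single (⟨v, h⟩ : Fin n)]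
    · rw [if_pos rfl]
    · intro b _ hb
      exact if_neg fun hc => hb (Fin.ext hc)
    · intro habs; exact absurd (Finset.mem_univ _) habs
  · rw [dif_neg h, Finset.sum_eq_zero]
    intro k _
    exact if_neg fun hc => h (by rw [← hc]; exact k.2)

lemma wsum_lwt_of_ge (j : ℕ) (hj : n ≤ j) (γ : Fin n → ℚ) : wsum (lwt j) γ = 0 :=
  Finset.sum_eq_zero fun k _ => by
    show (if j ≤ (k : ℕ) then (1 : ℚ) else 0) * γ k = 0
    rw [if_neg (by have := k.2; omega), zero_mul]

lemma wsum_lwt_sub (γ : Fin n → ℚ) (i : Fin n) :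
    wsum (lwt (i : ℕ)) γ - wsum (lwt ((i : ℕ) + 1)) γ = γ i := by
  unfold wsum
  rw [← Finset.sum_sub_distrib]
  have h : ∀ k : Fin n, lwt (i : ℕ) k * γ k - lwt ((i : ℕ) + 1) k * γ k
      = if (k : ℕ) = (i : ℕ) then γ k else 0 := by
    intro k
    show (if (i : ℕ) ≤ (k : ℕ) then (1 : ℚ) else 0) * γ k
        - (if (i : ℕ) + 1 ≤ (k : ℕ) then (1 : ℚ) else 0) * γ k = _
    by_cases h1 : (k : ℕ) = (i : ℕ)
    · rw [if_pos (show (i : ℕ) ≤ (k : ℕ) by omega),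
        if_neg (show ¬((i : ℕ) + 1 ≤ (k : ℕ)) by omega), if_pos h1]
      ring
    · rw [if_neg h1]
      by_cases h2 : (i : ℕ) ≤ (k : ℕ)
      · rw [if_pos h2, if_pos (by omega)]; ring
      · rw [if_neg h2, if_neg (by omega)]; ring
  rw [Finset.sum_congr rfl fun k _ => h k, sum_eq_val γ (i : ℕ), dif_pos i.2]

lemma sum_lwt (γ : Fin n → ℚ) : (∑ j : Fin n, wsum (lwt (j : ℕ)) γ) = wsum hwt γ := by
  unfold wsum
  rw [Finset.sum_comm]
  refine Finset.sum_congr rfl fun i _ => ?_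
  rw [← Finset.sum_mul]
  congr 1
  show (∑ j : Fin n, if (j : ℕ) ≤ (i : ℕ) then (1 : ℚ) else 0) = hwt i
  rw [Fin.sum_univ_eq_sum_range (fun j => if j ≤ (i : ℕ) then (1 : ℚ) else 0)]
  have hfilter : (Finset.range n).filter (fun j => j ≤ (i : ℕ)) = Finset.range ((i : ℕ) + 1) := by
    ext x
    simp only [Finset.mem_filter, Finset.mem_range]
    have := i.2
    omega
  rw [Finset.sum_ite, hfilter]
  simp only [Finset.sum_const, Finset.card_range, nsmul_eq_mul, mul_one, Finset.sum_const_zero,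
    add_zero, hwt]
  push_cast
  ring

lemma coeff_kostantQ_zero (R : Finset (Fin n → ℚ)) (β : Fin n → ℚ)
    (hR : ∀ α ∈ R, 1 ≤ wsum hwt α) (k : ℕ) (hk : wsum hwt β < (k : ℚ)) :
    PowerSeries.coeff k (kostantQ R β) = 0 := by
  rw [kostantQ, PowerSeries.coeff_mk]
  have hE : IsEmpty {m : {α // α ∈ R} → ℕ //
      (∑ α, m α) = k ∧ (∑ α, (m α : ℚ) • (α : Fin n → ℚ)) = β} := by
    constructor
    rintro ⟨m, hm1, hm2⟩
    have hH : wsum hwt β = ∑ α : {α // α ∈ R}, (m α : ℚ) * wsum hwt (α : Fin n → ℚ) := by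
      rw [← hm2, wsum_sum]
    have h1 : (k : ℚ) ≤ wsum hwt β := by
      rw [hH]
      have h2 : ((∑ α, m α : ℕ) : ℚ) = (k : ℚ) := Nat.cast_inj.mpr hm1
      rw [← h2]
      push_cast
      refine Finset.sum_le_sum fun α _ => ?_
      exact le_mul_of_one_le_right (Nat.cast_nonneg _) (hR α.1 α.2)
    linarith
  rw [Nat.card_of_isEmpty]
  norm_num

lemma coeff_kostantQ_eq_one (β : Fin n → ℚ) (c : Fin n → ℕ)
    (hc : ∀ j : Fin n, (c j : ℚ) = wsum (lwt (j : ℕ)) β) :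
    PowerSeries.coeff (∑ j, c j) (kostantQ (rootsB n) β) = 1 := by
  classical
  rw [kostantQ, PowerSeries.coeff_mk]
  have hβ : (∑ j : Fin n, (c j : ℚ) • sRt j) = β := by
    funext i
    rw [Finset.sum_apply]
    have h1 : ∀ j : Fin n, ((c j : ℚ) • sRt j) i
        = (if i = j then (c j : ℚ) else 0) - (if (i : ℕ) + 1 = (j : ℕ) then (c j : ℚ) else 0) := by
      intro j
      rw [Pi.smul_apply, smul_eq_mul, sRt_apply]
      split_ifs <;> ring
    rw [Finset.sum_congr rfl fun j _ => h1 j, Finset.sum_sub_distrib]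
    have h2 : (∑ j : Fin n, if i = j then (c j : ℚ) else 0) = (c i : ℚ) := by
      rw [Finset.sum_ite_eq]
      simp
    have h3 : (∑ j : Fin n, if (i : ℕ) + 1 = (j : ℕ) then (c j : ℚ) else 0)
        = wsum (lwt ((i : ℕ) + 1)) β := by
      rw [Finset.sum_congr rfl fun j _ => if_congr (eq_comm (a := (i : ℕ) + 1)) rfl rfl,
        sum_eq_val (fun j => (c j : ℚ)) ((i : ℕ) + 1)]
      by_cases h : (i : ℕ) + 1 < n
      · rw [dif_pos h]
        exact hc ⟨(i : ℕ) + 1, h⟩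
      · rw [dif_neg h, wsum_lwt_of_ge _ (by omega) β]
    rw [h2, h3, hc i]
    exact wsum_lwt_sub β i
  have hd : wsum hwt β = ∑ j : Fin n, (c j : ℚ) := by
    rw [← hβ, wsum_sum]
    exact Finset.sum_congr rfl fun j _ => by rw [wsum_hwt_sRt, mul_one]
  set m₀ : {α // α ∈ rootsB n} → ℕ :=
    fun α => ∑ j : Fin n, if α.1 = sRt j then c j else 0 with hm₀def
  have hm₀val : ∀ t : Fin n, m₀ ⟨sRt t, sRt_mem t⟩ = c t := by
    intro t
    show (∑ j : Fin n, if sRt t = sRt j then c j else 0) = c t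
    rw [Finset.sum_congr rfl fun j _ => if_congr sRt_inj.eq_iff rfl rfl, Finset.sum_ite_eq]
    simp
  have hm₀zero : ∀ α : {α // α ∈ rootsB n}, (∀ t, α.1 ≠ sRt t) → m₀ α = 0 :=
    fun α hα => Finset.sum_eq_zero fun j _ => if_neg (hα j)
  have key : ∀ m : {α // α ∈ rootsB n} → ℕ,
      (∑ α, m α) = (∑ j, c j) → (∑ α, (m α : ℚ) • (α : Fin n → ℚ)) = β → m = m₀ := by
    intro m hm1 hm2
    have hsumH : (∑ α : {α // α ∈ rootsB n}, (m α : ℚ) * wsum hwt (α : Fin n → ℚ))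
        = wsum hwt β := by rw [← hm2, wsum_sum]
    have hzero : ∀ α : {α // α ∈ rootsB n}, wsum hwt (α : Fin n → ℚ) ≠ 1 → m α = 0 := by
      intro α hα
      have hnn : ∀ α' : {α // α ∈ rootsB n}, α' ∈ Finset.univ →
          (0 : ℚ) ≤ (m α' : ℚ) * (wsum hwt (α' : Fin n → ℚ) - 1) := by
        intro α' _
        have h5 := one_le_hwt_root α'.2
        have h6 : (0 : ℚ) ≤ wsum hwt (α' : Fin n → ℚ) - 1 := by linarith
        exact mul_nonneg (Nat.cast_nonneg _) h6
      have hstot : (∑ α' : {α // α ∈ rootsB n}, (m α' : ℚ) * (wsum hwt (α' : Fin n → ℚ) - 1))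
          = 0 := by
        have e1 : (∑ α' : {α // α ∈ rootsB n}, (m α' : ℚ)) = ∑ j : Fin n, (c j : ℚ) := by
          have := congrArg (Nat.cast : ℕ → ℚ) hm1
          push_cast at this
          exact this
        simp only [mul_sub, mul_one, Finset.sum_sub_distrib, hsumH, hd, e1, sub_self]
      have h7 := (Finset.sum_eq_zero_iff_of_nonneg hnn).mp hstot α (Finset.mem_univ _)
      have h8 := one_le_hwt_root α.2
      have h9 : wsum hwt (α : Fin n → ℚ) - 1 ≠ 0 := fun hc => hα (by linarith [sub_eq_zero.mp hc])
      have h10 : (m α : ℚ) = 0 := by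
        rcases mul_eq_zero.mp h7 with h | h
        · exact h
        · exact absurd h h9
      exact_mod_cast h10
    have hval : ∀ t : Fin n, m ⟨sRt t, sRt_mem t⟩ = c t := by
      intro t
      have h4 : (∑ α : {α // α ∈ rootsB n}, (m α : ℚ) * wsum (lwt (t : ℕ)) (α : Fin n → ℚ))
          = wsum (lwt (t : ℕ)) β := by rw [← hm2, wsum_sum]
      have h5 : ∀ α : {α // α ∈ rootsB n}, (m α : ℚ) * wsum (lwt (t : ℕ)) (α : Fin n → ℚ)
          = if α = (⟨sRt t, sRt_mem t⟩ : {α // α ∈ rootsB n}) then (m α : ℚ) else 0 := by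
        intro α
        by_cases h6 : α = (⟨sRt t, sRt_mem t⟩ : {α // α ∈ rootsB n})
        · rw [if_pos h6, h6]
          show (m _ : ℚ) * wsum (lwt (t : ℕ)) (sRt t) = _
          rw [wsum_lwt_sRt, if_pos rfl, mul_one]
        · rw [if_neg h6]
          by_cases h7 : m α = 0
          · rw [h7]; norm_num
          · have h8 : wsum hwt (α : Fin n → ℚ) = 1 := by
              by_contra h9; exact h7 (hzero α h9)
            obtain ⟨u, hu⟩ := root_hwt_eq_one α.2 h8
            have hut : u ≠ t := fun hut => h6 (Subtype.ext (by rw [hu, hut]))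
            rw [show (α : Fin n → ℚ) = sRt u from hu, wsum_lwt_sRt, if_neg hut, mul_zero]
      rw [Finset.sum_congr rfl fun α _ => h5 α, Finset.sum_ite_eq'] at h4
      simp only [Finset.mem_univ, if_pos] at h4
      have h11 : (m ⟨sRt t, sRt_mem t⟩ : ℚ) = (c t : ℚ) := by rw [h4, hc t]
      exact_mod_cast h11
    funext α
    by_cases h10 : ∃ t, (α : Fin n → ℚ) = sRt t
    · obtain ⟨t, ht⟩ := h10
      have hα : α = (⟨sRt t, sRt_mem t⟩ : {α // α ∈ rootsB n}) := Subtype.ext ht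
      rw [hα, hval t, hm₀val t]
    · push_neg at h10
      rw [hm₀zero α h10, hzero α ?_]
      intro h12
      obtain ⟨u, hu⟩ := root_hwt_eq_one α.2 h12
      exact h10 u hu
  have hm₀1 : (∑ α, m₀ α) = ∑ j, c j := by
    show (∑ α : {α // α ∈ rootsB n}, ∑ j : Fin n, if α.1 = sRt j then c j else 0) = _
    rw [Finset.sum_comm]
    refine Finset.sum_congr rfl fun j _ => ?_
    rw [Fintype.sum_eq_single (⟨sRt j, sRt_mem j⟩ : {α // α ∈ rootsB n})
      (fun α hα => if_neg (fun hc => hα (Subtype.ext hc)))]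
    exact if_pos rfl
  have hm₀2 : (∑ α, (m₀ α : ℚ) • (α : Fin n → ℚ)) = β := by
    rw [← hβ]
    funext i
    rw [Finset.sum_apply, Finset.sum_apply]
    have h1 : ∀ α : {α // α ∈ rootsB n}, ((m₀ α : ℚ) • (α : Fin n → ℚ)) i
        = ∑ j : Fin n, (if α.1 = sRt j then (c j : ℚ) else 0) * (α : Fin n → ℚ) i := by
      intro α
      rw [Pi.smul_apply, smul_eq_mul]
      have h2 : (m₀ α : ℚ) = ∑ j : Fin n, (if α.1 = sRt j then (c j : ℚ) else 0) := by
        show ((∑ j : Fin n, if α.1 = sRt j then c j else 0 : ℕ) : ℚ) = _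
        rw [Nat.cast_sum]
        exact Finset.sum_congr rfl fun j _ => by
          rw [apply_ite (Nat.cast : ℕ → ℚ), Nat.cast_zero]
      rw [h2, Finset.sum_mul]
    rw [Finset.sum_congr rfl fun α _ => h1 α, Finset.sum_comm]
    refine Finset.sum_congr rfl fun j _ => ?_
    rw [Pi.smul_apply, smul_eq_mul]
    rw [Fintype.sum_eq_single (⟨sRt j, sRt_mem j⟩ : {α // α ∈ rootsB n})
      (fun α hα => by rw [if_neg (fun hc => hα (Subtype.ext hc)), zero_mul])]
    rw [if_pos rfl]
  have hcard : Nat.card {m : {α // α ∈ rootsB n} → ℕ //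
      (∑ α, m α) = (∑ j, c j) ∧ (∑ α, (m α : ℚ) • (α : Fin n → ℚ)) = β} = 1 := by
    rw [Nat.card_eq_one_iff_unique]
    constructor
    · constructor
      rintro ⟨m, hm1, hm2⟩ ⟨m', hm1', hm2'⟩
      exact Subtype.ext ((key m hm1 hm2).trans (key m' hm1' hm2').symm)
    · exact ⟨⟨m₀, hm₀1, hm₀2⟩⟩
  rw [hcard]
  norm_num

lemma strictMono_perm_eq_one (τ : Equiv.Perm (Fin n)) (h : StrictMono (τ : Fin n → Fin n)) :
    τ = 1 := by
  refine Equiv.ext fun i => ?_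
  have h1 := Fin.coe_orderIso_apply (StrictMono.orderIsoOfSurjective _ h τ.surjective) i
  rw [show (StrictMono.orderIsoOfSurjective (τ : Fin n → Fin n) h τ.surjective) i = τ i from
    congrFun (StrictMono.coe_orderIsoOfSurjective _ _ _) i] at h1
  simpa using Fin.ext h1

lemma H_wAct_lt (v : Fin n → ℚ) (hv : StrictMono v) (hpos : ∀ i, 0 < v i)
    (σ : Equiv.Perm (Fin n)) (ε : Fin n → Bool)
    (hne : ¬(σ = 1 ∧ ε = fun _ => false)) :
    wsum hwt (wAct σ ε v) < wsum hwt v := by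
  have hwtpos : ∀ i : Fin n, 0 < hwt i := by
    intro i
    simp only [hwt]
    have : (0 : ℚ) ≤ ((i : ℕ) : ℚ) := Nat.cast_nonneg _
    linarith
  have hmono : Monovary (hwt (n := n)) v := by
    intro i j hij
    have h1 : (i : ℕ) ≤ (j : ℕ) := le_of_lt (hv.lt_iff_lt.mp hij)
    simp only [hwt]
    have h2 : ((i : ℕ) : ℚ) ≤ ((j : ℕ) : ℚ) := by exact_mod_cast h1
    linarith
  have hle2 : (∑ i, hwt i * v (σ⁻¹ i)) ≤ ∑ i, hwt i * v i :=
    hmono.sum_mul_comp_perm_le_sum_mul (σ := σ⁻¹)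
  have hEq : wsum hwt (wAct σ ε v)
      = ∑ i, hwt i * ((if ε i then (-1 : ℚ) else 1) * v (σ⁻¹ i)) := rfl
  by_cases hε : ∀ i, ε i = false
  · have hσ : σ ≠ 1 := fun h => hne ⟨h, funext hε⟩
    have hlhs : wsum hwt (wAct σ ε v) = ∑ i, hwt i * v (σ⁻¹ i) := by
      rw [hEq]
      exact Finset.sum_congr rfl fun i _ => by rw [hε i]; norm_num
    rw [hlhs]
    show (∑ i, hwt i * v (σ⁻¹ i)) < ∑ i, hwt i * v i
    refine (hmono.sum_mul_comp_perm_lt_sum_mul_iff (σ := σ⁻¹)).mpr ?_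
    intro hmv
    apply hσ
    have hsm : StrictMono (⇑σ⁻¹ : Fin n → Fin n) := by
      intro i j hij
      rcases lt_trichotomy (σ⁻¹ i) (σ⁻¹ j) with h | h | h
      · exact h
      · exact absurd (σ⁻¹.injective h) (by intro hc; rw [hc] at hij; exact lt_irrefl _ hij)
      · exfalso
        have h13 := hmv (show (v ∘ ⇑σ⁻¹) j < (v ∘ ⇑σ⁻¹) i from hv h)
        simp only [hwt] at h13
        have h14 : ((j : ℕ) : ℚ) ≤ ((i : ℕ) : ℚ) := by linarith
        have h15 : (j : ℕ) ≤ (i : ℕ) := by exact_mod_cast h14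
        have h16 : (i : ℕ) < (j : ℕ) := hij
        omega
    have h17 := strictMono_perm_eq_one σ⁻¹ hsm
    exact inv_eq_one.mp h17
  · push_neg at hε
    obtain ⟨i0, hi0⟩ := hε
    have hi0' : ε i0 = true := by
      cases hb : ε i0
      · exact absurd hb hi0
      · rfl
    have hlt1 : (∑ i, hwt i * ((if ε i then (-1 : ℚ) else 1) * v (σ⁻¹ i)))
        < ∑ i, hwt i * v (σ⁻¹ i) := by
      refine Finset.sum_lt_sum (fun i _ => ?_) ⟨i0, Finset.mem_univ _, ?_⟩
      · have hp : 0 < hwt i * v (σ⁻¹ i) := mul_pos (hwtpos i) (hpos _)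
        split_ifs with h
        · nlinarith
        · linarith [le_refl (hwt i * v (σ⁻¹ i))]
      · have hp : 0 < hwt i0 * v (σ⁻¹ i0) := mul_pos (hwtpos i0) (hpos _)
        rw [if_pos hi0']
        nlinarith
    calc wsum hwt (wAct σ ε v)
        = ∑ i, hwt i * ((if ε i then (-1 : ℚ) else 1) * v (σ⁻¹ i)) := hEq
      _ < ∑ i, hwt i * v (σ⁻¹ i) := hlt1
      _ ≤ ∑ i, hwt i * v i := hle2

end KFaux
end


/-- For `λ, μ` dominant of type `B_n` with `λ - μ` a nonnegative
integral combination of positive roots, `K^{B_n}_{λ,μ}(q)` is monic of degree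
`∑_{i=1}^n i (λ_i - μ_i)`. -/
theorem KB_monic_of_degree (n : ℕ) (hn : 1 ≤ n) (lam mu : Fin n → ℚ)
    (hlam : DominantB lam) (hmu : DominantB mu)
    (hQ : ∃ m : {α // α ∈ rootsB n} → ℕ,
      (∑ α, (m α : ℚ) • (α : Fin n → ℚ)) = lam - mu) :
    ∃ d : ℕ, (d : ℚ) = (∑ i : Fin n, (((i : ℕ) : ℚ) + 1) * (lam i - mu i)) ∧
      PowerSeries.coeff d (KB n lam mu) = 1 ∧
      ∀ k : ℕ, d < k → PowerSeries.coeff k (KB n lam mu) = 0 := by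
  classical
  obtain ⟨mw, hmw⟩ := hQ
  have hLnat : ∀ j : Fin n, ∃ k : ℕ, (k : ℚ) = KFaux.wsum (KFaux.lwt (j : ℕ)) (lam - mu) := by
    intro j
    rw [← hmw, KFaux.wsum_sum]
    have hroot := fun α : {α // α ∈ rootsB n} => KFaux.root_lwt_nat (j : ℕ) α.2
    choose k hk using hroot
    refine ⟨∑ α, mw α * k α, ?_⟩
    push_cast
    exact Finset.sum_congr rfl fun α _ => by rw [hk α]
  choose c hc using hLnat
  have hDlam : KFaux.wsum KFaux.hwt (lam - mu) = ((∑ j, c j : ℕ) : ℚ) := by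
    rw [← KFaux.sum_lwt]
    push_cast
    exact (Finset.sum_congr rfl fun j _ => hc j).symm
  set v : Fin n → ℚ := lam + rhoB n with hvdef
  have hvmono : StrictMono v := by
    intro i j hij
    have h1 : lam i ≤ lam j := hlam.1 (le_of_lt hij)
    have h2 : rhoB n i < rhoB n j := by
      simp only [rhoB]
      have h3 : (i : ℕ) < (j : ℕ) := hij
      have h4 : ((i : ℕ) : ℚ) < ((j : ℕ) : ℚ) := by exact_mod_cast h3
      linarith
    simp only [hvdef, Pi.add_apply]
    linarith
  have hvpos : ∀ i, 0 < v i := by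
    intro i
    have h1 := hlam.2.1 i
    simp only [hvdef, Pi.add_apply, rhoB]
    have h2 : (0 : ℚ) ≤ ((i : ℕ) : ℚ) := Nat.cast_nonneg _
    linarith
  have hwActid : wAct 1 (fun _ => false) v - (mu + rhoB n) = lam - mu := by
    funext i
    simp only [wAct, Pi.sub_apply, Pi.add_apply, hvdef, inv_one, Equiv.Perm.one_apply,
      if_neg (by simp : ¬((false : Bool) = true))]
    ring
  have hvsub : KFaux.wsum KFaux.hwt v - KFaux.wsum KFaux.hwt (mu + rhoB n)
      = ((∑ j, c j : ℕ) : ℚ) := by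
    rw [← KFaux.wsum_sub, show v - (mu + rhoB n) = lam - mu from by
      funext i; simp only [hvdef, Pi.sub_apply, Pi.add_apply]; ring, hDlam]
  have hvanish : ∀ k : ℕ, ((∑ j, c j : ℕ) : ℚ) ≤ (k : ℚ) → ∀ σ : Equiv.Perm (Fin n),
      ∀ ε : Fin n → Bool, ¬(σ = 1 ∧ ε = fun _ => false) →
      PowerSeries.coeff k (kostantQ (rootsB n) (wAct σ ε v - (mu + rhoB n))) = 0 := by
    intro k hk σ ε hne
    refine KFaux.coeff_kostantQ_zero _ _ (fun α hα => KFaux.one_le_hwt_root hα) k ?_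
    rw [KFaux.wsum_sub]
    have h1 := KFaux.H_wAct_lt v hvmono hvpos σ ε hne
    linarith
  have hcoeffKB : ∀ k : ℕ, PowerSeries.coeff k (KB n lam mu)
      = ∑ σ : Equiv.Perm (Fin n), ∑ ε : Fin n → Bool,
        wDet σ ε * PowerSeries.coeff k (kostantQ (rootsB n) (wAct σ ε v - (mu + rhoB n))) := by
    intro k
    rw [KB, map_sum]
    refine Finset.sum_congr rfl fun σ _ => ?_
    rw [map_sum]
    exact Finset.sum_congr rfl fun ε _ => by rw [map_zsmul, smul_eq_mul]
  refine ⟨∑ j, c j, ?_, ?_, ?_⟩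
  · rw [← hDlam]
    simp [KFaux.wsum, KFaux.hwt, Pi.sub_apply]
  · rw [hcoeffKB]
    rw [Finset.sum_eq_single (1 : Equiv.Perm (Fin n))]
    · rw [Finset.sum_eq_single (fun _ => false : Fin n → Bool)]
      · have h1 : wDet (1 : Equiv.Perm (Fin n)) (fun _ => false) = 1 := by simp [wDet]
        rw [h1, one_mul, hwActid]
        exact KFaux.coeff_kostantQ_eq_one (lam - mu) c hc
      · intro ε _ hε
        rw [hvanish _ le_rfl 1 ε (fun h => hε h.2), mul_zero]
      · intro h; exact absurd (Finset.mem_univ _) h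
    · intro σ _ hσ
      refine Finset.sum_eq_zero fun ε _ => ?_
      rw [hvanish _ le_rfl σ ε (fun h => hσ h.1), mul_zero]
    · intro h; exact absurd (Finset.mem_univ _) h
  · intro k hk
    rw [hcoeffKB]
    refine Finset.sum_eq_zero fun σ _ => Finset.sum_eq_zero fun ε _ => ?_
    by_cases h : σ = 1 ∧ ε = (fun _ => false)
    · obtain ⟨rfl, rfl⟩ := h
      rw [hwActid]
      rw [KFaux.coeff_kostantQ_zero _ _ (fun α hα => KFaux.one_le_hwt_root hα) k ?_, mul_zero]
      rw [hDlam]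
      exact_mod_cast hk
    · rw [hvanish k (by exact_mod_cast le_of_lt hk) σ ε h, mul_zero]
end

section
/- Let n ≥ 1 and let λ, μ be dominant weights of type C_n such that λ − μ is a nonnegative integral combination of the positive roots of C_n (in particular |λ| − |μ| is an even nonnegative integer, where |λ| = Σ_{i=1}^n λ_i). Then the Kostka–Foulkes polynomial K^{C_n}_{λ,μ}(q) is a monic polynomial in q of degree Σ_{i=1}^n i·(λ_i − μ_i) − (|λ| − |μ|)/2. -/
open scoped BigOperators

namespace KCAux

open Finset

variable {n : ℕ}

def ip (β γ : Fin n → ℚ) : ℚ := ∑ i, β i * γ i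

lemma ip_single (a : Fin n) (c : ℚ) (γ : Fin n → ℚ) : ip (Pi.single a c) γ = c * γ a := by
  unfold ip
  rw [Finset.sum_eq_single a]
  · simp
  · intro b _ hb; simp [Pi.single_apply, Ne.symm hb]
  · simp

lemma ip_add_left (f g h : Fin n → ℚ) : ip (f + g) h = ip f h + ip g h := by
  simp [ip, add_mul, Finset.sum_add_distrib]

lemma ip_sub_left (f g h : Fin n → ℚ) : ip (f - g) h = ip f h - ip g h := by
  simp [ip, sub_mul, Finset.sum_sub_distrib]

lemma ip_smul_left (c : ℚ) (f h : Fin n → ℚ) : ip (c • f) h = c * ip f h := by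
  simp [ip, Finset.mul_sum, mul_assoc]

lemma ip_sum_left {ι : Type*} (s : Finset ι) (f : ι → Fin n → ℚ) (h : Fin n → ℚ) :
    ip (∑ j ∈ s, f j) h = ∑ j ∈ s, ip (f j) h := by
  simp only [ip, Finset.sum_apply, Finset.sum_mul]
  exact Finset.sum_comm

lemma ip_sum_right {ι : Type*} (s : Finset ι) (f : Fin n → ℚ) (g : ι → Fin n → ℚ) :
    ip f (∑ j ∈ s, g j) = ∑ j ∈ s, ip f (g j) := by
  simp only [ip, Finset.sum_apply, Finset.mul_sum]
  exact Finset.sum_comm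

lemma mem_rootsC_iff {α : Fin n → ℚ} : α ∈ rootsC n ↔
    (∃ i j : Fin n, j < i ∧ α = Pi.single i 1 - Pi.single j 1) ∨
    (∃ i j : Fin n, j < i ∧ α = Pi.single i 1 + Pi.single j 1) ∨
    (∃ i : Fin n, α = Pi.single i 2) := by
  simp only [rootsC, rootsD, Finset.mem_union, Finset.mem_image, Finset.mem_filter,
    Finset.mem_univ, true_and, or_assoc]
  constructor
  · rintro (⟨p, hp, rfl⟩ | ⟨p, hp, rfl⟩ | ⟨i, rfl⟩)
    exacts [Or.inl ⟨p.1, p.2, hp, rfl⟩, Or.inr (Or.inl ⟨p.1, p.2, hp, rfl⟩),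
      Or.inr (Or.inr ⟨i, rfl⟩)]
  · rintro (⟨i, j, hij, rfl⟩ | ⟨i, j, hij, rfl⟩ | ⟨i, rfl⟩)
    exacts [Or.inl ⟨(i, j), hij, rfl⟩, Or.inr (Or.inl ⟨(i, j), hij, rfl⟩),
      Or.inr (Or.inr ⟨i, rfl⟩)]

def sRoot (k : Fin n) : Fin n → ℚ :=
  if (k : ℕ) = 0 then Pi.single k 2 else
    Pi.single k 1 - Pi.single (⟨(k : ℕ) - 1, Nat.lt_of_le_of_lt (Nat.sub_le _ _) k.2⟩ : Fin n) 1

def om (k : Fin n) : Fin n → ℚ := fun i =>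
  if (k : ℕ) = 0 then 1/2 else if (k : ℕ) ≤ (i : ℕ) then 1 else 0

lemma sRoot_mem (k : Fin n) : sRoot k ∈ rootsC n := by
  by_cases hk : (k : ℕ) = 0
  · rw [sRoot, if_pos hk]
    exact mem_rootsC_iff.mpr (Or.inr (Or.inr ⟨k, rfl⟩))
  · rw [sRoot, if_neg hk]
    exact mem_rootsC_iff.mpr (Or.inl ⟨k, _, by simp [Fin.lt_def]; omega, rfl⟩)

lemma one_le_ip_rootsC {α : Fin n → ℚ} (hα : α ∈ rootsC n) : 1 ≤ ip α (rhoB n) := by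
  rcases mem_rootsC_iff.mp hα with ⟨i, j, hij, rfl⟩ | ⟨i, j, hij, rfl⟩ | ⟨i, rfl⟩
  · rw [ip_sub_left, ip_single, ip_single]
    have h1 : (j : ℕ) + 1 ≤ (i : ℕ) := hij
    have h2 : ((j : ℕ) : ℚ) + 1 ≤ ((i : ℕ) : ℚ) := by exact_mod_cast h1
    simp only [rhoB, one_mul]; linarith
  · rw [ip_add_left, ip_single, ip_single]
    have h1 : (0 : ℚ) ≤ ((j : ℕ) : ℚ) := Nat.cast_nonneg _
    have h2 : (0 : ℚ) ≤ ((i : ℕ) : ℚ) := Nat.cast_nonneg _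
    simp only [rhoB, one_mul]; linarith
  · rw [ip_single]
    have h1 : (0 : ℚ) ≤ ((i : ℕ) : ℚ) := Nat.cast_nonneg _
    simp only [rhoB]; linarith

lemma exists_sRoot_of_ip_eq_one {α : Fin n → ℚ} (hα : α ∈ rootsC n)
    (h1 : ip α (rhoB n) = 1) : ∃ k, α = sRoot k := by
  rcases mem_rootsC_iff.mp hα with ⟨i, j, hij, rfl⟩ | ⟨i, j, hij, rfl⟩ | ⟨i, rfl⟩
  · rw [ip_sub_left, ip_single, ip_single] at h1
    simp only [rhoB, one_mul] at h1
    have hij' : (j : ℕ) < (i : ℕ) := hij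
    have h2 : ((i : ℕ) : ℚ) = ((j : ℕ) : ℚ) + 1 := by linarith
    have h3 : (i : ℕ) = (j : ℕ) + 1 := by exact_mod_cast h2
    refine ⟨i, ?_⟩
    rw [sRoot, if_neg (show ¬(i : ℕ) = 0 by omega)]
    have hj : (⟨(i : ℕ) - 1, Nat.lt_of_le_of_lt (Nat.sub_le _ _) i.2⟩ : Fin n) = j :=
      Fin.ext (by simp only; omega)
    rw [hj]
  · rw [ip_add_left, ip_single, ip_single] at h1
    simp only [rhoB, one_mul] at h1
    have hij' : (j : ℕ) < (i : ℕ) := hij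
    have h2 : ((i : ℕ) : ℚ) + ((j : ℕ) : ℚ) = 0 := by linarith
    have h3 : (i : ℕ) + (j : ℕ) = 0 := by exact_mod_cast h2
    omega
  · rw [ip_single] at h1
    simp only [rhoB] at h1
    have h2 : ((i : ℕ) : ℚ) = 0 := by linarith
    have h3 : (i : ℕ) = 0 := by exact_mod_cast h2
    exact ⟨i, by rw [sRoot, if_pos h3]⟩

lemma ip_sRoot_om (j k : Fin n) : ip (sRoot j) (om k) = if j = k then 1 else 0 := by
  by_cases hj : (j : ℕ) = 0 <;> by_cases hk : (k : ℕ) = 0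
  · rw [sRoot, if_pos hj, ip_single, if_pos (Fin.ext (hj.trans hk.symm))]
    simp [om, hk]
  · rw [sRoot, if_pos hj, ip_single, if_neg (fun h : j = k => hk (h ▸ hj))]
    simp only [om, if_neg hk]
    rw [if_neg (by omega)]
    ring
  · rw [sRoot, if_neg hj, ip_sub_left, ip_single, ip_single,
      if_neg (fun h : j = k => hj (h ▸ hk))]
    simp only [om, if_pos hk]
    ring
  · rw [sRoot, if_neg hj, ip_sub_left, ip_single, ip_single]
    have hj'v : ((⟨(j : ℕ) - 1, Nat.lt_of_le_of_lt (Nat.sub_le _ _) j.2⟩ : Fin n) : ℕ)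
        = (j : ℕ) - 1 := rfl
    simp only [om, if_neg hk, one_mul, hj'v]
    by_cases hjk : j = k
    · have hv : (k : ℕ) = (j : ℕ) := by rw [hjk]
      rw [if_pos hjk, if_pos (by omega), if_neg (by omega)]
      norm_num
    · have hjk' : (j : ℕ) ≠ (k : ℕ) := fun h => hjk (Fin.ext h)
      rw [if_neg hjk]
      by_cases h2 : (k : ℕ) ≤ (j : ℕ)
      · rw [if_pos h2, if_pos (by omega)]; norm_num
      · rw [if_neg h2, if_neg (by omega)]; norm_num

lemma exists_nat_ip_om {α : Fin n → ℚ} (hα : α ∈ rootsC n) (k : Fin n) :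
    ∃ N : ℕ, (N : ℚ) = ip α (om k) := by
  rcases mem_rootsC_iff.mp hα with ⟨i, j, hij, rfl⟩ | ⟨i, j, hij, rfl⟩ | ⟨i, rfl⟩
  · have hij' : (j : ℕ) < (i : ℕ) := hij
    rw [ip_sub_left, ip_single, ip_single]
    simp only [om, one_mul]
    split_ifs <;>
      first
        | (refine ⟨0, ?_⟩; norm_num; done)
        | (refine ⟨1, ?_⟩; norm_num; done)
        | (exfalso; omega)
  · rw [ip_add_left, ip_single, ip_single]
    simp only [om, one_mul]
    split_ifs <;>
      first
        | (refine ⟨0, ?_⟩; norm_num; done)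
        | (refine ⟨1, ?_⟩; norm_num; done)
        | (refine ⟨2, ?_⟩; norm_num; done)
  · rw [ip_single]
    simp only [om]
    split_ifs <;>
      first
        | (refine ⟨0, ?_⟩; norm_num; done)
        | (refine ⟨1, ?_⟩; norm_num; done)
        | (refine ⟨2, ?_⟩; norm_num; done)
lemma sRoot_apply_eq_zero {k i : Fin n} (h1 : (k : ℕ) ≠ (i : ℕ)) (h2 : (k : ℕ) ≠ (i : ℕ) + 1) :
    sRoot k i = 0 := by
  simp only [sRoot]
  split_ifs <;>
    (try simp only [Pi.sub_apply, Pi.single_apply, Fin.ext_iff, Fin.val_mk]) <;>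
    (try split_ifs) <;>
    first | (norm_num; done) | (exfalso; omega)

lemma om_sRoot_next {t i i' : Fin n} (h : (i' : ℕ) = (i : ℕ) + 1) :
    om i' t * sRoot i' i = -(if (i : ℕ) + 1 ≤ (t : ℕ) then 1 else 0) := by
  simp only [om, sRoot]
  split_ifs <;>
    (try simp only [Pi.sub_apply, Pi.single_apply, Fin.ext_iff, Fin.val_mk, h]) <;>
    (try simp only [h] at *) <;>
    (try split_ifs) <;>
    first | (norm_num; done) | (exfalso; omega)

lemma om_sRoot_sum (t i : Fin n) :
    ∑ k : Fin n, om k t * sRoot k i = if t = i then 1 else 0 := by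
  classical
  have e1 : om i t * sRoot i i
      = if (i : ℕ) = 0 then 1 else (if (i : ℕ) ≤ (t : ℕ) then 1 else 0) := by
    simp only [om, sRoot]
    split_ifs <;>
      (try simp only [Pi.sub_apply, Pi.single_apply, Fin.ext_iff, Fin.val_mk]) <;>
      (try split_ifs) <;>
      first | (norm_num; done) | (exfalso; omega)
  by_cases hi : (i : ℕ) + 1 < n
  · have hv : ((⟨(i : ℕ) + 1, hi⟩ : Fin n) : ℕ) = (i : ℕ) + 1 := rfl
    have hii' : i ≠ (⟨(i : ℕ) + 1, hi⟩ : Fin n) := by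
      intro h
      have := congrArg Fin.val h
      rw [hv] at this
      omega
    have hsum : ∑ k : Fin n, om k t * sRoot k i
        = ∑ k ∈ ({i, ⟨(i : ℕ) + 1, hi⟩} : Finset (Fin n)), om k t * sRoot k i := by
      symm
      apply Finset.sum_subset (Finset.subset_univ _)
      intro k _ hk
      simp only [Finset.mem_insert, Finset.mem_singleton, not_or] at hk
      obtain ⟨hk1, hk2⟩ := hk
      rw [sRoot_apply_eq_zero (fun h => hk1 (Fin.ext h))
        (fun h => hk2 (Fin.ext (h.trans hv.symm))), mul_zero]
    rw [hsum, Finset.sum_pair hii', e1, om_sRoot_next hv]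
    simp only [Fin.ext_iff]
    split_ifs <;> first | (norm_num; done) | (exfalso; omega)
  · have hsum : ∑ k : Fin n, om k t * sRoot k i
        = ∑ k ∈ ({i} : Finset (Fin n)), om k t * sRoot k i := by
      symm
      apply Finset.sum_subset (Finset.subset_univ _)
      intro k _ hk
      simp only [Finset.mem_singleton] at hk
      have hk2 : (k : ℕ) ≠ (i : ℕ) + 1 := by
        have := k.2
        omega
      rw [sRoot_apply_eq_zero (fun h => hk (Fin.ext h)) hk2, mul_zero]
    rw [hsum, Finset.sum_singleton, e1]
    have ht := t.2
    have hii := i.2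
    simp only [Fin.ext_iff]
    split_ifs <;> first | (norm_num; done) | (exfalso; omega)

lemma reconstruct (x : Fin n → ℚ) : ∑ k : Fin n, ip x (om k) • sRoot k = x := by
  funext i
  rw [Finset.sum_apply]
  simp only [Pi.smul_apply, smul_eq_mul]
  have h1 : ∀ k : Fin n, ip x (om k) * sRoot k i = ∑ t : Fin n, x t * om k t * sRoot k i := by
    intro k; rw [ip, Finset.sum_mul]
  rw [Finset.sum_congr rfl fun k _ => h1 k, Finset.sum_comm]
  have h2 : ∀ t : Fin n, ∑ k : Fin n, x t * om k t * sRoot k i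
      = x t * (if t = i then 1 else 0) := by
    intro t
    rw [← om_sRoot_sum t i, Finset.mul_sum]
    exact Finset.sum_congr rfl fun k _ => (mul_assoc _ _ _)
  rw [Finset.sum_congr rfl fun t _ => h2 t]
  have h3 : ∀ t : Fin n, x t * (if t = i then 1 else 0) = if t = i then x t else 0 := by
    intro t; split_ifs <;> ring
  rw [Finset.sum_congr rfl fun t _ => h3 t, Finset.sum_ite_eq' Finset.univ i x]
  simp

lemma om_sum (hn : 0 < n) : ∑ k : Fin n, om k = rhoB n := by
  funext i
  rw [Finset.sum_apply]
  have h1 : ∀ k : Fin n, om k i =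
      (if (k : ℕ) ≤ (i : ℕ) then (1 : ℚ) else 0) - (if (k : ℕ) = 0 then (1 : ℚ)/2 else 0) := by
    intro k
    simp only [om]
    split_ifs <;> first | (norm_num; done) | (exfalso; omega)
  rw [Finset.sum_congr rfl fun k _ => h1 k, Finset.sum_sub_distrib]
  have h2 : ∑ k : Fin n, (if (k : ℕ) ≤ (i : ℕ) then (1 : ℚ) else 0) = (i : ℕ) + 1 := by
    rw [Fin.sum_univ_eq_sum_range (fun k => if k ≤ (i : ℕ) then (1 : ℚ) else 0)]
    rw [← Finset.sum_filter]
    have hset : (Finset.range n).filter (fun k => k ≤ (i : ℕ)) = Finset.range ((i : ℕ) + 1) := by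
      ext a
      simp only [Finset.mem_filter, Finset.mem_range]
      have := i.2
      omega
    rw [hset, Finset.sum_const, Finset.card_range, nsmul_eq_mul, mul_one]
    push_cast
    ring
  have h3 : ∑ k : Fin n, (if (k : ℕ) = 0 then (1 : ℚ)/2 else 0) = 1/2 := by
    rw [Fin.sum_univ_eq_sum_range (fun k => if k = 0 then (1 : ℚ)/2 else 0)]
    rw [Finset.sum_ite_eq' (Finset.range n) 0 (fun _ => (1 : ℚ)/2)]
    rw [if_pos (Finset.mem_range.mpr hn)]
  rw [h2, h3, rhoB]
  ring

lemma sRoot_injective : Function.Injective (sRoot (n := n)) := by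
  intro a b hab
  have h2 : ip (sRoot a) (om a) = ip (sRoot b) (om a) := by rw [hab]
  rw [ip_sRoot_om, ip_sRoot_om, if_pos rfl] at h2
  by_contra hne
  rw [if_neg (fun h : b = a => hne h.symm)] at h2
  norm_num at h2

lemma coeff_kostantQ (R : Finset (Fin n → ℚ)) (γ : Fin n → ℚ) (k : ℕ) :
    PowerSeries.coeff k (kostantQ R γ) =
      (Nat.card {m : {α // α ∈ R} → ℕ //
        (∑ α, m α) = k ∧ (∑ α, (m α : ℚ) • (α : Fin n → ℚ)) = γ} : ℤ) := by
  rw [kostantQ, PowerSeries.coeff_mk]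

lemma coeff_kostantQ_eq_zero {γ : Fin n → ℚ} {k : ℕ} (h : ip γ (rhoB n) < (k : ℚ)) :
    PowerSeries.coeff k (kostantQ (rootsC n) γ) = 0 := by
  rw [coeff_kostantQ]
  have hempty : IsEmpty {m : {α // α ∈ rootsC n} → ℕ //
      (∑ α, m α) = k ∧ (∑ α, (m α : ℚ) • (α : Fin n → ℚ)) = γ} := by
    constructor
    rintro ⟨mm, hsum, heq⟩
    have h1 : ip γ (rhoB n)
        = ∑ α : {α // α ∈ rootsC n}, (mm α : ℚ) * ip (α : Fin n → ℚ) (rhoB n) := by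
      rw [← heq, ip_sum_left]
      exact Finset.sum_congr rfl fun α _ => ip_smul_left _ _ _
    have h2 : ((k : ℕ) : ℚ) = ∑ α : {α // α ∈ rootsC n}, (mm α : ℚ) := by
      rw [← hsum]; push_cast; rfl
    have h3 : ∑ α : {α // α ∈ rootsC n}, (mm α : ℚ)
        ≤ ∑ α : {α // α ∈ rootsC n}, (mm α : ℚ) * ip (α : Fin n → ℚ) (rhoB n) :=
      Finset.sum_le_sum fun α _ =>
        le_mul_of_one_le_right (Nat.cast_nonneg _) (one_le_ip_rootsC α.2)
    linarith
  haveI := hempty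
  rw [Nat.card_of_isEmpty]
  norm_num

lemma wAct_ip_lt (lam : Fin n → ℚ) (hmono : Monotone lam) (hpos : ∀ i, 0 ≤ lam i)
    (σ : Equiv.Perm (Fin n)) (ε : Fin n → Bool) (hne : ¬(σ = 1 ∧ ε = fun _ => false)) :
    ip (wAct σ ε (lam + rhoC n)) (rhoB n) < ip (lam + rhoC n) (rhoB n) := by
  set v : Fin n → ℚ := lam + rhoC n with hv
  have hvpos : ∀ i, 0 < v i := by
    intro i
    have h0 := hpos i
    have h1 : (0 : ℚ) ≤ ((i : ℕ) : ℚ) := Nat.cast_nonneg _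
    simp only [hv, Pi.add_apply, rhoC]
    linarith
  have hvmono : StrictMono v := by
    intro i j hij
    have h1 := hmono hij.le
    have h2 : ((i : ℕ) : ℚ) < ((j : ℕ) : ℚ) := by exact_mod_cast hij
    simp only [hv, Pi.add_apply, rhoC]
    linarith
  have hrpos : ∀ i : Fin n, 0 < rhoB n i := by
    intro i
    have h1 : (0 : ℚ) ≤ ((i : ℕ) : ℚ) := Nat.cast_nonneg _
    simp only [rhoB]; linarith
  have hrmono : StrictMono (rhoB n) := by
    intro i j hij
    have h2 : ((i : ℕ) : ℚ) < ((j : ℕ) : ℚ) := by exact_mod_cast hij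
    simp only [rhoB]; linarith
  have hmv : Monovary v (rhoB n) := fun i j h => (hvmono.monotone) ((hrmono.lt_iff_lt.mp h).le)
  have hL : ip (wAct σ ε v) (rhoB n)
      = ∑ j, (if ε (σ j) then (-1 : ℚ) else 1) * v j * rhoB n (σ j) := by
    rw [ip, ← Equiv.sum_comp σ (fun i => wAct σ ε v i * rhoB n i)]
    refine Finset.sum_congr rfl fun j _ => ?_
    simp only [wAct, Equiv.Perm.inv_def, Equiv.symm_apply_apply]
  have hstep2 : ∑ j, v j * rhoB n (σ j) ≤ ∑ j, v j * rhoB n j :=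
    hmv.sum_mul_comp_perm_le_sum_mul
  have hRHS : ip v (rhoB n) = ∑ j, v j * rhoB n j := rfl
  by_cases hε : ∀ i, ε i = false
  · have hσ : σ ≠ 1 := fun h => hne ⟨h, funext hε⟩
    have hLe : ip (wAct σ ε v) (rhoB n) = ∑ j, v j * rhoB n (σ j) := by
      rw [hL]
      refine Finset.sum_congr rfl fun j _ => ?_
      rw [hε (σ j)]
      norm_num
    rw [hLe, hRHS]
    refine (hmv.sum_mul_comp_perm_lt_sum_mul_iff).mpr ?_
    intro hM
    apply hσ
    have hsm : StrictMono ⇑σ := by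
      intro i j hij
      rcases lt_trichotomy (σ i) (σ j) with h | h | h
      · exact h
      · exact absurd (σ.injective h) hij.ne
      · exact absurd (hM (hrmono h)) (not_le.mpr (hvmono hij))
    have h1 : ⇑σ = id := by
      haveI : WellFoundedLT (Fin n) := inferInstance
      refine (StrictMono.range_inj (γ := Fin n) hsm strictMono_id).mp ?_
      rw [σ.surjective.range_eq, Set.range_id]
    refine Equiv.ext fun x => ?_
    rw [Equiv.Perm.one_apply]
    exact congrFun h1 x
  · push_neg at hε
    obtain ⟨i0, hi0⟩ := hε
    have hi0' : ε i0 = true := by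
      cases h : ε i0
      · exact absurd h hi0
      · rfl
    have h1 : ∑ j, (if ε (σ j) then (-1 : ℚ) else 1) * v j * rhoB n (σ j)
        < ∑ j, v j * rhoB n (σ j) := by
      refine Finset.sum_lt_sum (fun j _ => ?_) ⟨σ⁻¹ i0, Finset.mem_univ _, ?_⟩
      · split_ifs with h
        · nlinarith [hvpos j, hrpos (σ j)]
        · exact le_of_eq (by ring)
      · rw [show σ (σ⁻¹ i0) = i0 from σ.apply_symm_apply i0, hi0', if_pos rfl]
        nlinarith [hvpos (σ⁻¹ i0), hrpos i0]
    rw [hL, hRHS]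
    exact lt_of_lt_of_le h1 hstep2
end KCAux

/-- For `λ, μ` dominant of type `C_n` with `λ - μ` a nonnegative
integral combination of positive roots, `K^{C_n}_{λ,μ}(q)` is monic of degree
`∑_{i=1}^n i (λ_i - μ_i) - (|λ| - |μ|)/2`. -/
theorem KC_monic_of_degree (n : ℕ) (hn : 1 ≤ n) (lam mu : Fin n → ℚ)
    (hlam : DominantC lam) (hmu : DominantC mu)
    (hQ : ∃ m : {α // α ∈ rootsC n} → ℕ,
      (∑ α, (m α : ℚ) • (α : Fin n → ℚ)) = lam - mu) :
    ∃ d : ℕ, (d : ℚ) = (∑ i : Fin n, (((i : ℕ) : ℚ) + 1) * (lam i - mu i)) -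
        (∑ i : Fin n, (lam i - mu i)) / 2 ∧
      PowerSeries.coeff d (KC n lam mu) = 1 ∧
      ∀ k : ℕ, d < k → PowerSeries.coeff k (KC n lam mu) = 0 := by
  classical
  obtain ⟨m, hm⟩ := hQ
  have hNat : ∀ k : Fin n, ∃ N : ℕ, (N : ℚ) = KCAux.ip (lam - mu) (KCAux.om k) := by
    intro k
    have hs : KCAux.ip (lam - mu) (KCAux.om k)
        = ∑ α : {α // α ∈ rootsC n}, (m α : ℚ) * KCAux.ip (α : Fin n → ℚ) (KCAux.om k) := by
      rw [← hm, KCAux.ip_sum_left]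
      exact Finset.sum_congr rfl fun α _ => KCAux.ip_smul_left _ _ _
    choose Nr hNr using fun (α : {α // α ∈ rootsC n}) => KCAux.exists_nat_ip_om α.2 k
    refine ⟨∑ α, m α * Nr α, ?_⟩
    rw [hs]
    push_cast
    exact Finset.sum_congr rfl fun α _ => by rw [hNr]
  choose N hN using hNat
  have hn0 : 0 < n := hn
  have hdq : ((∑ k, N k : ℕ) : ℚ) = KCAux.ip (lam - mu) (rhoB n) := by
    push_cast
    rw [Finset.sum_congr rfl fun k _ => hN k, ← KCAux.ip_sum_right, KCAux.om_sum hn0]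
  have hargid : wAct 1 (fun _ => false) (lam + rhoC n) - (mu + rhoC n) = lam - mu := by
    funext i
    simp only [wAct, inv_one, Equiv.Perm.one_apply, Pi.sub_apply, Pi.add_apply]
    norm_num
  have hvan : ∀ K : ℕ, ((∑ k, N k : ℕ) : ℚ) ≤ (K : ℚ) →
      ∀ (σ : Equiv.Perm (Fin n)) (ε : Fin n → Bool), ¬(σ = 1 ∧ ε = fun _ => false) →
      PowerSeries.coeff K
        (kostantQ (rootsC n) (wAct σ ε (lam + rhoC n) - (mu + rhoC n))) = 0 := by
    intro K hK σ ε hne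
    apply KCAux.coeff_kostantQ_eq_zero
    have h1 := KCAux.wAct_ip_lt lam hlam.1 hlam.2.1 σ ε hne
    have h2 : lam - mu = (lam + rhoC n) - (mu + rhoC n) := by funext i; simp only [Pi.sub_apply, Pi.add_apply]; ring
    rw [KCAux.ip_sub_left]
    rw [h2, KCAux.ip_sub_left] at hdq
    linarith
  have hcoeff : ∀ K : ℕ, PowerSeries.coeff K (KC n lam mu)
      = ∑ σ : Equiv.Perm (Fin n), ∑ ε : Fin n → Bool, wDet σ ε *
        PowerSeries.coeff K
          (kostantQ (rootsC n) (wAct σ ε (lam + rhoC n) - (mu + rhoC n))) := by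
    intro K
    rw [KC, map_sum]
    refine Finset.sum_congr rfl fun σ _ => ?_
    rw [map_sum]
    refine Finset.sum_congr rfl fun ε _ => ?_
    rw [map_zsmul, smul_eq_mul]
  -- the top coefficient of the identity term
  set m₀ := fun α : {α // α ∈ rootsC n} =>
    if h : ∃ k : Fin n, (α : Fin n → ℚ) = KCAux.sRoot k then N h.choose else 0 with hm₀def
  have hm₀_simple : ∀ k : Fin n, m₀ ⟨KCAux.sRoot k, KCAux.sRoot_mem k⟩ = N k := by
    intro k
    have hex : ∃ j : Fin n,
        ((⟨KCAux.sRoot k, KCAux.sRoot_mem k⟩ : {α // α ∈ rootsC n}) : Fin n → ℚ)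
          = KCAux.sRoot j := ⟨k, rfl⟩
    simp only [hm₀def]
    rw [dif_pos hex]
    congr 1
    exact (KCAux.sRoot_injective hex.choose_spec).symm
  have hm₀_zero : ∀ α : {α // α ∈ rootsC n},
      (¬ ∃ k : Fin n, (α : Fin n → ℚ) = KCAux.sRoot k) → m₀ α = 0 := by
    intro α h
    simp only [hm₀def]
    rw [dif_neg h]
  have hres : ∀ (M : Type) [AddCommMonoid M] (f : (Fin n → ℚ) → M),
      (∑ α : {α // α ∈ rootsC n}, m₀ α • f (α : Fin n → ℚ))
        = ∑ k : Fin n, N k • f (KCAux.sRoot k) := by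
    intro M _ f
    have h1 : ∑ α : {α // α ∈ rootsC n}, m₀ α • f (α : Fin n → ℚ)
        = ∑ α ∈ Finset.image
            (fun k : Fin n => (⟨KCAux.sRoot k, KCAux.sRoot_mem k⟩ : {α // α ∈ rootsC n}))
            Finset.univ, m₀ α • f (α : Fin n → ℚ) := by
      symm
      apply Finset.sum_subset (Finset.subset_univ _)
      intro α _ hα
      have hno : ¬ ∃ k : Fin n, (α : Fin n → ℚ) = KCAux.sRoot k := by
        rintro ⟨k, hk⟩
        exact hα (Finset.mem_image.mpr ⟨k, Finset.mem_univ _, (Subtype.ext hk.symm)⟩)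
      rw [hm₀_zero α hno, zero_nsmul]
    rw [h1, Finset.sum_image (by
      intro a _ b _ h
      exact KCAux.sRoot_injective (Subtype.ext_iff.mp h))]
    exact Finset.sum_congr rfl fun k _ => by rw [hm₀_simple k]
  have hA : (∑ α : {α // α ∈ rootsC n}, m₀ α) = ∑ k, N k := by
    have h := hres ℕ (fun _ => 1)
    simpa using h
  have hB : (∑ α : {α // α ∈ rootsC n}, (m₀ α : ℚ) • (α : Fin n → ℚ)) = lam - mu := by
    have h1 := hres (Fin n → ℚ) (fun x => x)
    have h2 : ∀ α : {α // α ∈ rootsC n}, (m₀ α : ℚ) • (α : Fin n → ℚ)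
        = m₀ α • (α : Fin n → ℚ) := fun α => Nat.cast_smul_eq_nsmul ℚ _ _
    rw [Finset.sum_congr rfl fun α _ => h2 α, h1]
    have h3 : ∀ k : Fin n, (N k) • KCAux.sRoot k
        = KCAux.ip (lam - mu) (KCAux.om k) • KCAux.sRoot k := by
      intro k
      rw [← hN k, Nat.cast_smul_eq_nsmul]
    rw [Finset.sum_congr rfl fun k _ => h3 k]
    exact KCAux.reconstruct (lam - mu)
  have huniq : ∀ mm : {α // α ∈ rootsC n} → ℕ,
      (∑ α, mm α) = (∑ k, N k) →
      (∑ α, (mm α : ℚ) • (α : Fin n → ℚ)) = lam - mu → mm = m₀ := by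
    intro mm hsum heq
    have hip : KCAux.ip (lam - mu) (rhoB n)
        = ∑ α : {α // α ∈ rootsC n}, (mm α : ℚ) * KCAux.ip (α : Fin n → ℚ) (rhoB n) := by
      rw [← heq, KCAux.ip_sum_left]
      exact Finset.sum_congr rfl fun α _ => KCAux.ip_smul_left _ _ _
    have hcastsum : (∑ α : {α // α ∈ rootsC n}, (mm α : ℚ))
        = KCAux.ip (lam - mu) (rhoB n) := by
      rw [← hdq, ← hsum]
      push_cast
      rfl
    have hzero' : ∑ α : {α // α ∈ rootsC n},
        (mm α : ℚ) * (KCAux.ip (α : Fin n → ℚ) (rhoB n) - 1) = 0 := by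
      have h4 : ∑ α : {α // α ∈ rootsC n},
          ((mm α : ℚ) * KCAux.ip (α : Fin n → ℚ) (rhoB n) - (mm α : ℚ)) = 0 := by
        rw [Finset.sum_sub_distrib, ← hip, hcastsum]
        ring
      rw [← h4]
      exact Finset.sum_congr rfl fun α _ => by ring
    have hterm0 : ∀ α : {α // α ∈ rootsC n},
        (mm α : ℚ) * (KCAux.ip (α : Fin n → ℚ) (rhoB n) - 1) = 0 := by
      intro α
      have hnn : ∀ β ∈ (Finset.univ : Finset {α // α ∈ rootsC n}),
          0 ≤ (mm β : ℚ) * (KCAux.ip (β : Fin n → ℚ) (rhoB n) - 1) :=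
        fun β _ => mul_nonneg (Nat.cast_nonneg _)
          (by linarith [KCAux.one_le_ip_rootsC β.2])
      exact (Finset.sum_eq_zero_iff_of_nonneg hnn).mp hzero' α (Finset.mem_univ _)
    have hns : ∀ α : {α // α ∈ rootsC n},
        KCAux.ip (α : Fin n → ℚ) (rhoB n) ≠ 1 → mm α = 0 := by
      intro α hα
      rcases mul_eq_zero.mp (hterm0 α) with h | h
      · exact_mod_cast h
      · exact absurd (by linarith : KCAux.ip (α : Fin n → ℚ) (rhoB n) = 1) hα
    have hsval : ∀ k : Fin n, (mm ⟨KCAux.sRoot k, KCAux.sRoot_mem k⟩ : ℚ) = N k := by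
      intro k
      have hipk : KCAux.ip (lam - mu) (KCAux.om k)
          = ∑ α : {α // α ∈ rootsC n}, (mm α : ℚ) * KCAux.ip (α : Fin n → ℚ) (KCAux.om k) := by
        rw [← heq, KCAux.ip_sum_left]
        exact Finset.sum_congr rfl fun α _ => KCAux.ip_smul_left _ _ _
      have hsingle := Finset.sum_eq_single
        (f := fun α : {α // α ∈ rootsC n} =>
          (mm α : ℚ) * KCAux.ip (α : Fin n → ℚ) (KCAux.om k))
        (s := Finset.univ)
        (⟨KCAux.sRoot k, KCAux.sRoot_mem k⟩ : {α // α ∈ rootsC n})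
        (fun b _ hb => by
          by_cases hb1 : KCAux.ip (b : Fin n → ℚ) (rhoB n) = 1
          · obtain ⟨j, hj⟩ := KCAux.exists_sRoot_of_ip_eq_one b.2 hb1
            have hjk : j ≠ k := by
              intro h
              exact hb (Subtype.ext (by rw [hj, h]))
            simp only [hj, KCAux.ip_sRoot_om, if_neg hjk, mul_zero]
          · simp only [hns b hb1, Nat.cast_zero, zero_mul])
        (fun h => absurd (Finset.mem_univ _) h)
      rw [hN k, hipk, hsingle]
      show (mm ⟨KCAux.sRoot k, KCAux.sRoot_mem k⟩ : ℚ)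
          = (mm ⟨KCAux.sRoot k, KCAux.sRoot_mem k⟩ : ℚ) * KCAux.ip (KCAux.sRoot k) (KCAux.om k)
      rw [KCAux.ip_sRoot_om k k, if_pos rfl, mul_one]
    funext α
    by_cases h : ∃ k : Fin n, (α : Fin n → ℚ) = KCAux.sRoot k
    · obtain ⟨k, hk⟩ := h
      have hα : α = ⟨KCAux.sRoot k, KCAux.sRoot_mem k⟩ := Subtype.ext hk
      rw [hα]
      have h1 : (mm ⟨KCAux.sRoot k, KCAux.sRoot_mem k⟩ : ℚ)
          = (m₀ ⟨KCAux.sRoot k, KCAux.sRoot_mem k⟩ : ℚ) := by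
        rw [hsval k, hm₀_simple k]
      exact_mod_cast h1
    · have hne1 : KCAux.ip (α : Fin n → ℚ) (rhoB n) ≠ 1 :=
        fun hip1 => h (KCAux.exists_sRoot_of_ip_eq_one α.2 hip1)
      rw [hns α hne1, hm₀_zero α h]
  have hmain : PowerSeries.coeff (∑ k, N k) (kostantQ (rootsC n) (lam - mu)) = 1 := by
    rw [KCAux.coeff_kostantQ]
    have hcard : Nat.card {mm : {α // α ∈ rootsC n} → ℕ //
        (∑ α, mm α) = (∑ k, N k) ∧ (∑ α, (mm α : ℚ) • (α : Fin n → ℚ)) = lam - mu} = 1 := by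
      rw [Nat.card_eq_one_iff_exists]
      refine ⟨⟨m₀, hA, hB⟩, ?_⟩
      rintro ⟨mm, h1, h2⟩
      exact Subtype.ext (huniq mm h1 h2)
    rw [hcard]
    norm_num
  refine ⟨∑ k, N k, ?_, ?_, ?_⟩
  · rw [hdq]
    simp only [KCAux.ip, Pi.sub_apply, rhoB]
    rw [Finset.sum_div, ← Finset.sum_sub_distrib]
    exact Finset.sum_congr rfl fun i _ => by ring
  · rw [hcoeff (∑ k, N k),
      Finset.sum_eq_single (1 : Equiv.Perm (Fin n))
        (fun σ _ hσ => Finset.sum_eq_zero fun ε _ => by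
          rw [hvan _ le_rfl σ ε (fun hc => hσ hc.1), mul_zero])
        (fun h => absurd (Finset.mem_univ _) h),
      Finset.sum_eq_single (fun _ => false : Fin n → Bool)
        (fun ε _ hε => by rw [hvan _ le_rfl 1 ε (fun hc => hε hc.2), mul_zero])
        (fun h => absurd (Finset.mem_univ _) h),
      hargid, hmain]
    simp [wDet]
  · intro K hK
    rw [hcoeff K]
    refine Finset.sum_eq_zero fun σ _ => Finset.sum_eq_zero fun ε _ => ?_
    by_cases hc : σ = 1 ∧ ε = fun _ => false
    · obtain ⟨h1, h2⟩ := hc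
      subst h1
      subst h2
      rw [hargid, KCAux.coeff_kostantQ_eq_zero (by rw [← hdq]; exact_mod_cast hK), mul_zero]
    · rw [hvan K (by exact_mod_cast hK.le) σ ε hc, mul_zero]
end

section
/- Let n ≥ 2 and let λ, μ be dominant weights of type D_n such that λ − μ is a nonnegative integral combination of the positive roots of D_n. Then the Kostka–Foulkes polynomial K^{D_n}_{λ,μ}(q) is a monic polynomial in q of degree Σ_{i=2}^n (i−1)·(λ_i − μ_i). -/
open scoped BigOperators

namespace KDaux

open Finset

variable {n : ℕ}

/-- pairing of a weight functional `w` against `β`. -/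
def Phi (w β : Fin n → ℚ) : ℚ := ∑ k, w k * β k

lemma Phi_single (w : Fin n → ℚ) (i : Fin n) (c : ℚ) :
    Phi w (Pi.single i c) = w i * c := by
  simp only [Phi, Pi.single_apply, mul_ite, mul_zero]
  exact Fintype.sum_ite_eq' i _

lemma Phi_add (w β γ : Fin n → ℚ) : Phi w (β + γ) = Phi w β + Phi w γ := by
  simp [Phi, mul_add, Finset.sum_add_distrib]

lemma Phi_sub (w β γ : Fin n → ℚ) : Phi w (β - γ) = Phi w β - Phi w γ := by
  simp [Phi, mul_sub, Finset.sum_sub_distrib]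

lemma Phi_sum {ι : Type*} [Fintype ι] (w : Fin n → ℚ) (f : ι → ℚ) (g : ι → Fin n → ℚ) :
    Phi w (∑ a, f a • g a) = ∑ a, f a * Phi w (g a) := by
  simp only [Phi, Finset.sum_apply, Pi.smul_apply, smul_eq_mul, Finset.mul_sum]
  rw [Finset.sum_comm]
  apply Finset.sum_congr rfl
  intro a _
  apply Finset.sum_congr rfl
  intro k _
  ring

/-- the degree functional. -/
def wF : Fin n → ℚ := fun k => ((k : ℕ) : ℚ)

/-- truncated-sum functionals. -/
def wG (t : ℕ) : Fin n → ℚ := fun k => if t ≤ (k : ℕ) then 1 else 0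

/-- the coordinate-0 functional. -/
def w0 : Fin n → ℚ := fun k => if (k : ℕ) = 0 then 1 else 0

lemma mem_sub {i j : Fin n} (h : j < i) :
    Pi.single i (1 : ℚ) - Pi.single j 1 ∈ rootsD n := by
  apply Finset.mem_union_left
  exact Finset.mem_image.2 ⟨(i, j), Finset.mem_filter.2 ⟨Finset.mem_univ _, h⟩, rfl⟩

lemma mem_add {i j : Fin n} (h : j < i) :
    Pi.single i (1 : ℚ) + Pi.single j 1 ∈ rootsD n := by
  apply Finset.mem_union_right
  exact Finset.mem_image.2 ⟨(i, j), Finset.mem_filter.2 ⟨Finset.mem_univ _, h⟩, rfl⟩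

lemma master {α : Fin n → ℚ} (h : α ∈ rootsD n) :
    ∃ i j : Fin n, j < i ∧
      (α = Pi.single i 1 - Pi.single j 1 ∨ α = Pi.single i 1 + Pi.single j 1) := by
  rcases Finset.mem_union.1 h with h' | h' <;>
    · rcases Finset.mem_image.1 h' with ⟨p, hp, rfl⟩
      exact ⟨p.1, p.2, (Finset.mem_filter.1 hp).2, by simp⟩

lemma Phi_root_ge_one {α : Fin n → ℚ} (h : α ∈ rootsD n) : 1 ≤ Phi wF α := by
  obtain ⟨i, j, hji, hc | hc⟩ := master h <;> subst hc
  · rw [Phi_sub, Phi_single, Phi_single]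
    have : (j : ℕ) + 1 ≤ (i : ℕ) := hji
    simp only [wF, mul_one]
    have := (Nat.cast_le (α := ℚ)).2 this
    push_cast at this ⊢
    linarith
  · rw [Phi_add, Phi_single, Phi_single]
    have hj : (0:ℕ) ≤ (j : ℕ) := Nat.zero_le _
    have hi : (1:ℕ) ≤ (i : ℕ) := by
      have : (j:ℕ) < (i:ℕ) := hji
      omega
    simp only [wF, mul_one]
    have := (Nat.cast_le (α := ℚ)).2 hi
    have hj' : (0:ℚ) ≤ ((j:ℕ):ℚ) := Nat.cast_nonneg _
    push_cast at this ⊢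
    linarith

end KDaux
namespace KDaux

open Finset

variable {n : ℕ}

lemma sum_le_Phi {β : Fin n → ℚ} (m : {α // α ∈ rootsD n} → ℕ)
    (hm : (∑ a, (m a : ℚ) • (a : Fin n → ℚ)) = β) :
    ((∑ a, m a : ℕ) : ℚ) ≤ Phi wF β := by
  rw [← hm, Phi_sum]
  push_cast
  apply Finset.sum_le_sum
  intro a _
  calc (m a : ℚ) = (m a : ℚ) * 1 := by ring
  _ ≤ (m a : ℚ) * Phi wF a.1 :=
    mul_le_mul_of_nonneg_left (Phi_root_ge_one a.2) (Nat.cast_nonneg _)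

lemma coeff_kostantQ_eq_zero {β : Fin n → ℚ} {k : ℕ} (h : Phi wF β < (k : ℚ)) :
    PowerSeries.coeff k (kostantQ (rootsD n) β) = 0 := by
  rw [kostantQ, PowerSeries.coeff_mk]
  have : IsEmpty {m : {α // α ∈ rootsD n} → ℕ //
      (∑ α, m α) = k ∧ (∑ α, (m α : ℚ) • (α : Fin n → ℚ)) = β} := by
    constructor
    rintro ⟨m, hk, hm⟩
    have := sum_le_Phi m hm
    rw [hk] at this
    exact absurd h (not_lt.2 this)
  rw [Nat.card_of_isEmpty]
  norm_num

section Key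

variable (σ : Equiv.Perm (Fin n)) (ε : Fin n → Bool) (v : Fin n → ℚ)

lemma Phi_wAct :
    Phi wF (wAct σ ε v) =
      ∑ k, wF (σ k) * ((if ε (σ k) then (-1:ℚ) else 1) * v k) := by
  rw [Phi, ← Equiv.sum_comp σ (fun i => wF i * (wAct σ ε v) i)]
  apply Finset.sum_congr rfl
  intro k _
  simp [wAct, Equiv.Perm.inv_def, Equiv.symm_apply_apply]

variable {v} (hpos : ∀ k : Fin n, 0 < (k : ℕ) → 0 < v k)
    (habs : StrictMono fun k : Fin n => |v k|)

include hpos habs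

lemma monovary_wF_abs : Monovary (wF (n := n)) (fun k => |v k|) := by
  intro i j hij
  have hij' : i ≤ j := by
    by_contra hc
    exact absurd (habs.monotone (le_of_not_ge hc)) (not_le.2 hij)
  simp only [wF]
  exact_mod_cast (Nat.cast_le (α := ℚ)).2 hij'

lemma Phi_abs_eq : (∑ k, wF k * |v k|) = Phi wF v := by
  apply Finset.sum_congr rfl
  intro k _
  rcases Nat.eq_zero_or_pos (k : ℕ) with h0 | h0
  · simp [wF, h0]
  · rw [abs_of_pos (hpos k h0)]

lemma step1 : ∀ k : Fin n, wF (σ k) * ((if ε (σ k) then (-1:ℚ) else 1) * v k)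
    ≤ wF (σ k) * |v k| := by
  intro k
  apply mul_le_mul_of_nonneg_left _ (Nat.cast_nonneg _)
  rcases Bool.eq_false_or_eq_true (ε (σ k)) with h | h <;> simp [h]
  · exact neg_le_abs _
  · exact le_abs_self _

lemma key_le : Phi wF (wAct σ ε v) ≤ Phi wF v := by
  rw [Phi_wAct]
  calc ∑ k, wF (σ k) * ((if ε (σ k) then (-1:ℚ) else 1) * v k)
      ≤ ∑ k, wF (σ k) * |v k| := Finset.sum_le_sum fun k _ => step1 σ ε hpos habs k
    _ ≤ ∑ k, wF k * |v k| :=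
        (monovary_wF_abs hpos habs).sum_comp_perm_mul_le_sum_mul
    _ = Phi wF v := Phi_abs_eq hpos habs

lemma key_eq (hn : 0 < n) (hpar : (∏ i, (if ε i then (-1 : ℤ) else 1)) = 1)
    (heq : Phi wF (wAct σ ε v) = Phi wF v) :
    σ = 1 ∧ ε = fun _ => false := by
  rw [Phi_wAct] at heq
  have h1 : ∑ k, wF (σ k) * ((if ε (σ k) then (-1:ℚ) else 1) * v k)
      ≤ ∑ k, wF (σ k) * |v k| := Finset.sum_le_sum fun k _ => step1 σ ε hpos habs k
  have h2 : ∑ k, wF (σ k) * |v k| ≤ ∑ k, wF k * |v k| :=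
    (monovary_wF_abs hpos habs).sum_comp_perm_mul_le_sum_mul
  rw [← Phi_abs_eq hpos habs] at heq
  have e2 : ∑ k, wF (σ k) * |v k| = ∑ k, wF k * |v k| := le_antisymm h2 (by linarith)
  have e1 : ∑ k, wF (σ k) * ((if ε (σ k) then (-1:ℚ) else 1) * v k)
      = ∑ k, wF (σ k) * |v k| := by linarith
  -- from e2 : σ is monotone hence the identity
  have hmono : Monovary (wF ∘ σ) (fun k : Fin n => |v k|) :=
    ((monovary_wF_abs hpos habs).sum_comp_perm_mul_eq_sum_mul_iff).1 e2
  have hsm : StrictMono σ := by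
    have : Monotone σ := by
      intro i j hij
      rcases eq_or_lt_of_le hij with rfl | hij'
      · exact le_rfl
      · have h := hmono (habs hij')
        simp only [Function.comp, wF, Nat.cast_le] at h
        exact Fin.le_def.2 h
    exact this.strictMono_of_injective σ.injective
  have hσ1 : σ = 1 := by
    have hcoe : ⇑(StrictMono.orderIsoOfSurjective (σ : Fin n → Fin n) hsm σ.surjective) = ⇑σ :=
      StrictMono.coe_orderIsoOfSurjective _ hsm σ.surjective
    have hrefl : StrictMono.orderIsoOfSurjective (σ : Fin n → Fin n) hsm σ.surjective
        = OrderIso.refl (Fin n) := Subsingleton.elim _ _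
    rw [hrefl] at hcoe
    ext k
    have hk := congrFun hcoe k
    simp only [OrderIso.refl_apply, id_eq] at hk
    exact congrArg Fin.val hk.symm
  subst hσ1
  have e1' : ∀ k : Fin n, wF k * ((if ε k then (-1:ℚ) else 1) * v k) = wF k * |v k| := by
    have := (Finset.sum_eq_sum_iff_of_le
      (fun k _ => step1 1 ε hpos habs k)).1 (by simpa using e1)
    intro k
    exact this k (Finset.mem_univ k)
  have hεk : ∀ k : Fin n, 0 < (k : ℕ) → ε k = false := by
    intro k hk
    by_contra hc
    have hct : ε k = true := by simpa using hc
    have hw : (0:ℚ) < wF k := by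
      simp only [wF]
      exact_mod_cast hk
    have h := e1' k
    rw [hct, abs_of_pos (hpos k hk)] at h
    simp only [if_true] at h
    nlinarith [hpos k hk]
  constructor
  · rfl
  · funext k
    rcases Nat.eq_zero_or_pos (k : ℕ) with h0 | h0
    swap
    · exact hεk k h0
    have hk0 : k = ⟨0, hn⟩ := Fin.ext h0
    subst hk0
    by_contra hc
    have hct : ε ⟨0, hn⟩ = true := by simpa using hc
    rw [Finset.prod_eq_single (⟨0, hn⟩ : Fin n)] at hpar
    · rw [hct] at hpar; simp at hpar
    · intro b _ hb
      have : 0 < (b : ℕ) := by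
        rcases Nat.eq_zero_or_pos (b : ℕ) with h | h
        · exact absurd (Fin.ext h) hb
        · exact h
      rw [hεk b this]
      simp
    · intro h; exact absurd (Finset.mem_univ _) h

end Key

end KDaux
namespace KDaux

open Finset

variable {n : ℕ}

lemma Phi_wF_sub (i j : Fin n) :
    Phi wF (Pi.single i (1:ℚ) - Pi.single j 1) = ((i:ℕ):ℚ) - ((j:ℕ):ℚ) := by
  rw [Phi_sub, Phi_single, Phi_single]; simp [wF]

lemma Phi_wF_add (i j : Fin n) :
    Phi wF (Pi.single i (1:ℚ) + Pi.single j 1) = ((i:ℕ):ℚ) + ((j:ℕ):ℚ) := by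
  rw [Phi_add, Phi_single, Phi_single]; simp [wF]

lemma split {α : Fin n → ℚ} (hα : α ∈ rootsD n) (h2 : Phi wF α ≠ 1) :
    ∃ α' α'' : Fin n → ℚ, α' ∈ rootsD n ∧ α'' ∈ rootsD n ∧ α' + α'' = α := by
  obtain ⟨i, j, hji, hc | hc⟩ := master hα <;> subst hc
  · -- minus case : i ≥ j + 2
    have hΦ := Phi_wF_sub i j
    have hji' : (j:ℕ) < (i:ℕ) := hji
    have hij2 : (j:ℕ) + 2 ≤ (i:ℕ) := by
      rcases Nat.lt_or_ge ((j:ℕ)+1) (i:ℕ) with h | h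
      · omega
      · exfalso; apply h2
        have : (i:ℕ) = (j:ℕ) + 1 := by omega
        rw [hΦ, this]; push_cast; ring
    set k : Fin n := ⟨(j:ℕ)+1, by omega⟩ with hk
    have hjk : j < k := by simp [hk, Fin.lt_def]
    have hki : k < i := by simp [hk, Fin.lt_def]; omega
    exact ⟨_, _, mem_sub hki, mem_sub hjk, sub_add_sub_cancel _ _ _⟩
  · -- plus case
    have hji' : (j:ℕ) < (i:ℕ) := hji
    rcases Nat.eq_zero_or_pos (j:ℕ) with hj0 | hj1
    · -- j = 0, so i ≥ 2
      have hi2 : 2 ≤ (i:ℕ) := by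
        rcases Nat.lt_or_ge 1 (i:ℕ) with h | h
        · omega
        · exfalso; apply h2
          have : (i:ℕ) = 1 := by omega
          rw [Phi_wF_add, this, hj0]; norm_num
      set one : Fin n := ⟨1, by omega⟩ with hone
      have h1i : one < i := by simp [hone, Fin.lt_def]; omega
      have hj1' : j < one := by simp [hone, Fin.lt_def]; omega
      refine ⟨_, _, mem_sub h1i, mem_add hj1', ?_⟩
      abel
    · -- j ≥ 1
      set zero : Fin n := ⟨0, by omega⟩ with hzero
      have h0j : zero < j := by simp [hzero, Fin.lt_def]; omega
      have h0i : zero < i := by simp [hzero, Fin.lt_def]; omega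
      refine ⟨_, _, mem_add h0i, mem_sub h0j, ?_⟩
      abel

lemma exists_simple (e : ℕ) : ∀ (β : Fin n → ℚ) (m : {α // α ∈ rootsD n} → ℕ),
    (∑ a, (m a : ℚ) • (a : Fin n → ℚ)) = β →
    (∑ a, (m a : ℚ) * (Phi wF a.1 - 1)) ≤ (e : ℚ) →
    ∃ m' : {α // α ∈ rootsD n} → ℕ,
      (∑ a, (m' a : ℚ) • (a : Fin n → ℚ)) = β ∧ ∀ a, m' a ≠ 0 → Phi wF a.1 = 1 := by
  induction e with
  | zero =>
    intro β m hm hb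
    have hnn : ∀ a ∈ (univ : Finset {α // α ∈ rootsD n}),
        (0:ℚ) ≤ (m a : ℚ) * (Phi wF a.1 - 1) := fun a _ =>
      mul_nonneg (Nat.cast_nonneg _) (by linarith [Phi_root_ge_one a.2])
    have hz := (Finset.sum_eq_zero_iff_of_nonneg hnn).1
      (le_antisymm (by exact_mod_cast hb) (Finset.sum_nonneg hnn))
    refine ⟨m, hm, fun a ha => ?_⟩
    have := hz a (mem_univ a)
    rcases mul_eq_zero.1 this with h | h
    · exact absurd (by exact_mod_cast h) ha
    · linarith [Phi_root_ge_one a.2]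
  | succ e ih =>
    intro β m hm hb
    by_cases hs : ∀ a, m a ≠ 0 → Phi wF a.1 = 1
    · exact ⟨m, hm, hs⟩
    push_neg at hs
    obtain ⟨a₀, ha₀ne, ha₀Φ⟩ := hs
    obtain ⟨α', α'', h', h'', hsum⟩ := split a₀.2 ha₀Φ
    set a' : {α // α ∈ rootsD n} := ⟨α', h'⟩ with ha'
    set a'' : {α // α ∈ rootsD n} := ⟨α'', h''⟩ with ha''
    set m₂ : {α // α ∈ rootsD n} → ℕ := fun a =>
      (if a = a₀ then m a - 1 else m a) + (if a = a' then 1 else 0) +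
        (if a = a'' then 1 else 0) with hm₂
    have hone : 1 ≤ m a₀ := Nat.one_le_iff_ne_zero.2 ha₀ne
    have hcast : ∀ a, (m₂ a : ℚ) = (m a : ℚ) - (if a = a₀ then 1 else 0) +
        (if a = a' then 1 else 0) + (if a = a'' then 1 else 0) := by
      intro a
      by_cases h : a = a₀
      · subst h
        simp only [hm₂, if_pos rfl]
        push_cast [Nat.cast_sub hone]
        ring
      · simp only [hm₂, if_neg h]
        push_cast
        ring
    have hsum1 : ∀ (g : {α // α ∈ rootsD n} → Fin n → ℚ) (b),
        (∑ a, (if a = b then (1:ℚ) else 0) • g a) = g b := by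
      intro g b
      rw [Finset.sum_congr rfl (fun a _ => ite_smul _ _ _ _)]
      simp [Finset.sum_ite_eq']
    have hm2sum : (∑ a, (m₂ a : ℚ) • (a : Fin n → ℚ)) = β := by
      have key : (∑ a, (m₂ a : ℚ) • (a : Fin n → ℚ))
          = (∑ a, ((m a : ℚ) • (a : Fin n → ℚ)
              - (if a = a₀ then (1:ℚ) else 0) • (a : Fin n → ℚ)
              + (if a = a' then (1:ℚ) else 0) • (a : Fin n → ℚ)
              + (if a = a'' then (1:ℚ) else 0) • (a : Fin n → ℚ))) := by
        apply Finset.sum_congr rfl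
        intro a _
        rw [hcast a]; module
      rw [key, Finset.sum_add_distrib, Finset.sum_add_distrib, Finset.sum_sub_distrib,
        hsum1 _ a₀, hsum1 _ a', hsum1 _ a'', hm, ← hsum]
      show β - (α' + α'') + α' + α'' = β
      abel
    have hΦsplit : Phi wF a'.1 + Phi wF a''.1 = Phi wF a₀.1 := by
      rw [← hsum, Phi_add]
    have hsum2 : ∀ (b : {α // α ∈ rootsD n}),
        (∑ a, (if a = b then (1:ℚ) else 0) * (Phi wF a.1 - 1)) = Phi wF b.1 - 1 := by
      intro b
      rw [Finset.sum_congr rfl (fun a _ => ite_mul _ _ _ _)]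
      simp [Finset.sum_ite_eq']
    have hb2 : (∑ a, (m₂ a : ℚ) * (Phi wF a.1 - 1)) ≤ (e : ℚ) := by
      have key : (∑ a, (m₂ a : ℚ) * (Phi wF a.1 - 1))
          = (∑ a, ((m a : ℚ) * (Phi wF a.1 - 1)
              - (if a = a₀ then (1:ℚ) else 0) * (Phi wF a.1 - 1)
              + (if a = a' then (1:ℚ) else 0) * (Phi wF a.1 - 1)
              + (if a = a'' then (1:ℚ) else 0) * (Phi wF a.1 - 1))) := by
        apply Finset.sum_congr rfl
        intro a _
        rw [hcast a]; ring
      have this2 : (∑ a, (m₂ a : ℚ) * (Phi wF a.1 - 1))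
          = (∑ a, (m a : ℚ) * (Phi wF a.1 - 1)) - (Phi wF a₀.1 - 1) +
            (Phi wF a'.1 - 1) + (Phi wF a''.1 - 1) := by
        rw [key, Finset.sum_add_distrib, Finset.sum_add_distrib, Finset.sum_sub_distrib,
          hsum2 a₀, hsum2 a', hsum2 a'']
      rw [this2]
      push_cast at hb ⊢
      linarith
    exact ih β m₂ hm2sum hb2

end KDaux
namespace KDaux

open Finset

variable {n : ℕ}

lemma supp_one {β : Fin n → ℚ} {d : ℕ} (hd : (d:ℚ) = Phi wF β)
    (m : {α // α ∈ rootsD n} → ℕ) (hm1 : (∑ a, m a) = d)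
    (hm2 : (∑ a, (m a : ℚ) • (a : Fin n → ℚ)) = β) :
    ∀ a, m a ≠ 0 → Phi wF a.1 = 1 := by
  have h1 : (∑ a, (m a:ℚ) * Phi wF a.1) = Phi wF β := by rw [← hm2, Phi_sum]
  have h2 : (∑ a, (m a:ℚ)) = (d:ℚ) := by rw [← hm1]; push_cast; rfl
  have h0 : (∑ a, (m a:ℚ) * (Phi wF a.1 - 1)) = 0 := by
    simp only [mul_sub, mul_one, Finset.sum_sub_distrib]
    rw [h1, h2, hd]; ring
  have hnn : ∀ a ∈ (univ : Finset {α // α ∈ rootsD n}),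
      (0:ℚ) ≤ (m a : ℚ) * (Phi wF a.1 - 1) := fun a _ =>
    mul_nonneg (Nat.cast_nonneg _) (by linarith [Phi_root_ge_one a.2])
  intro a ha
  have := (Finset.sum_eq_zero_iff_of_nonneg hnn).1 h0 a (mem_univ a)
  rcases mul_eq_zero.1 this with h | h
  · exact absurd (by exact_mod_cast h) ha
  · linarith

lemma classify {α : Fin n → ℚ} (hα : α ∈ rootsD n) (h1 : Phi wF α = 1) :
    ∃ i j : Fin n, j < i ∧
      ((α = Pi.single i 1 - Pi.single j 1 ∧ (i:ℕ) = (j:ℕ)+1) ∨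
       (α = Pi.single i 1 + Pi.single j 1 ∧ (i:ℕ) = 1 ∧ (j:ℕ) = 0)) := by
  obtain ⟨i, j, hji, hc | hc⟩ := master hα
  · refine ⟨i, j, hji, Or.inl ⟨hc, ?_⟩⟩
    rw [hc, Phi_wF_sub] at h1
    have : ((i:ℕ):ℚ) = (((j:ℕ)+1 : ℕ):ℚ) := by push_cast; linarith
    exact_mod_cast this
  · refine ⟨i, j, hji, Or.inr ⟨hc, ?_, ?_⟩⟩ <;>
    · rw [hc, Phi_wF_add] at h1
      have h1' : ((((i:ℕ)+(j:ℕ)) : ℕ):ℚ) = ((1:ℕ):ℚ) := by push_cast; linarith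
      have h1'' : (i:ℕ) + (j:ℕ) = 1 := by exact_mod_cast h1'
      have hji' : (j:ℕ) < (i:ℕ) := hji
      omega

lemma wG_single (t : ℕ) (i : Fin n) :
    Phi (wG t) (Pi.single i (1:ℚ)) = if t ≤ (i:ℕ) then 1 else 0 := by
  rw [Phi_single]; simp [wG]

lemma w0_single (i : Fin n) :
    Phi w0 (Pi.single i (1:ℚ)) = if (i:ℕ) = 0 then 1 else 0 := by
  rw [Phi_single]; simp [w0]

lemma eval_s {β : Fin n → ℚ} (m : {α // α ∈ rootsD n} → ℕ)
    (hm2 : (∑ a, (m a : ℚ) • (a : Fin n → ℚ)) = β)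
    (hsupp : ∀ a, m a ≠ 0 → Phi wF a.1 = 1)
    {i j : Fin n} (hji : j < i) (hij : (i:ℕ) = (j:ℕ)+1) (hj : 1 ≤ (j:ℕ)) :
    (m ⟨Pi.single i 1 - Pi.single j 1, mem_sub hji⟩ : ℚ) = Phi (wG (i:ℕ)) β := by
  rw [← hm2, Phi_sum]
  rw [Finset.sum_eq_single (⟨Pi.single i 1 - Pi.single j 1, mem_sub hji⟩ :
      {α // α ∈ rootsD n})]
  · have hΦtgt : Phi (wG (i:ℕ)) (Pi.single i (1:ℚ) - Pi.single j 1) = 1 := by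
      rw [Phi_sub, wG_single, wG_single, if_pos le_rfl, if_neg (by omega)]; ring
    rw [hΦtgt, mul_one]
  · intro b _ hb
    by_cases hmb : m b = 0
    · simp [hmb]
    have hΦb := hsupp b hmb
    obtain ⟨i', j', hji', hcase⟩ := classify b.2 hΦb
    rcases hcase with ⟨hb', hii'⟩ | ⟨hb', hi1, hj0⟩
    · rw [hb', Phi_sub, wG_single, wG_single]
      by_cases hc1 : (i:ℕ) ≤ (j':ℕ)
      · rw [if_pos (by omega), if_pos hc1]; ring
      · by_cases hc2 : (i:ℕ) ≤ (i':ℕ)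
        · exfalso; apply hb
          obtain rfl : i' = i := Fin.ext (by omega)
          obtain rfl : j' = j := Fin.ext (by omega)
          exact Subtype.ext hb'
        · rw [if_neg hc2, if_neg hc1]; ring
    · rw [hb', Phi_add, wG_single, wG_single, if_neg (by omega), if_neg (by omega)]; ring
  · intro h; exact absurd (mem_univ _) h

/-- the simple root `e_1 - e_0`. -/
def finA (hn : 2 ≤ n) : {α // α ∈ rootsD n} :=
  ⟨Pi.single ⟨1, by omega⟩ 1 - Pi.single ⟨0, by omega⟩ 1, mem_sub (by simp [Fin.lt_def])⟩

/-- the simple root `e_1 + e_0`. -/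
def finB (hn : 2 ≤ n) : {α // α ∈ rootsD n} :=
  ⟨Pi.single ⟨1, by omega⟩ 1 + Pi.single ⟨0, by omega⟩ 1, mem_add (by simp [Fin.lt_def])⟩

lemma finA_ne_finB (hn : 2 ≤ n) : finA hn ≠ finB hn := by
  intro h
  have h' := congrFun (congrArg Subtype.val h) ⟨0, by omega⟩
  have hne : (⟨0, by omega⟩ : Fin n) ≠ ⟨1, by omega⟩ := by simp [Fin.ext_iff]
  simp [finA, finB, Pi.single_apply, hne] at h'
  norm_num at h'
lemma eval_AB {β : Fin n → ℚ} (hn : 2 ≤ n) (m : {α // α ∈ rootsD n} → ℕ)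
    (hm2 : (∑ a, (m a : ℚ) • (a : Fin n → ℚ)) = β)
    (hsupp : ∀ a, m a ≠ 0 → Phi wF a.1 = 1) :
    Phi (wG 1) β = (m (finA hn) : ℚ) + (m (finB hn) : ℚ) ∧
    Phi w0 β = (m (finB hn) : ℚ) - (m (finA hn) : ℚ) := by
  have hone : ((⟨1, by omega⟩ : Fin n) : ℕ) = 1 := rfl
  have hzero : ((⟨0, by omega⟩ : Fin n) : ℕ) = 0 := rfl
  have hterm : ∀ (w : Fin n → ℚ) (cA cB : ℚ),
      Phi w (finA hn).1 = cA → Phi w (finB hn).1 = cB →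
      (∀ i' j' : Fin n, j' < i' → (i':ℕ) = (j':ℕ)+1 → 1 ≤ (j':ℕ) →
        Phi w (Pi.single i' 1 - Pi.single j' 1) = 0) →
      Phi w β = cA * (m (finA hn) : ℚ) + cB * (m (finB hn) : ℚ) := by
    intro w cA cB hA hB hother
    rw [← hm2, Phi_sum]
    have hptwise : ∀ a : {α // α ∈ rootsD n},
        (m a : ℚ) * Phi w a.1 =
          (if a = finA hn then cA * (m a:ℚ) else 0) +
          (if a = finB hn then cB * (m a:ℚ) else 0) := by
      intro a
      by_cases haA : a = finA hn
      · rw [if_pos haA, if_neg (by rw [haA]; exact finA_ne_finB hn), haA]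
        have hA' : Phi w (finA hn).1 = cA := hA
        rw [hA']; ring
      by_cases haB : a = finB hn
      · rw [if_pos haB, if_neg haA, haB]
        have hB' : Phi w (finB hn).1 = cB := hB
        rw [hB']; ring
      by_cases hma : m a = 0
      · simp [hma, if_neg haA, if_neg haB]
      obtain ⟨i', j', hji', hcase⟩ := classify a.2 (hsupp a hma)
      rcases hcase with ⟨ha', hii'⟩ | ⟨ha', hi1, hj0⟩
      · by_cases hj'1 : 1 ≤ (j':ℕ)
        · rw [ha', hother i' j' hji' hii' hj'1, if_neg haA, if_neg haB]; ring
        · exfalso; apply haA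
          apply Subtype.ext
          have hi : i' = (⟨1, by omega⟩ : Fin n) := Fin.ext (show (i':ℕ) = 1 by omega)
          have hj : j' = (⟨0, by omega⟩ : Fin n) := Fin.ext (show (j':ℕ) = 0 by omega)
          rw [ha', hi, hj]; rfl
      · exfalso; apply haB
        apply Subtype.ext
        have hi : i' = (⟨1, by omega⟩ : Fin n) := Fin.ext (show (i':ℕ) = 1 by omega)
        have hj : j' = (⟨0, by omega⟩ : Fin n) := Fin.ext (show (j':ℕ) = 0 by omega)
        rw [ha', hi, hj]; rfl
    rw [Finset.sum_congr rfl (fun a _ => hptwise a), Finset.sum_add_distrib,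
      Finset.sum_ite_eq' univ (finA hn) (fun a => cA * (m a : ℚ)),
      Finset.sum_ite_eq' univ (finB hn) (fun a => cB * (m a : ℚ))]
    simp
  constructor
  · have := hterm (wG 1) 1 1 ?_ ?_ ?_
    · rw [this]; ring
    · show Phi (wG 1) (Pi.single _ 1 - Pi.single _ 1) = 1
      rw [Phi_sub, wG_single, wG_single, hone, hzero, if_pos le_rfl, if_neg (by omega)]; ring
    · show Phi (wG 1) (Pi.single _ 1 + Pi.single _ 1) = 1
      rw [Phi_add, wG_single, wG_single, hone, hzero, if_pos le_rfl, if_neg (by omega)]; ring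
    · intro i' j' hji' hii' hj'
      rw [Phi_sub, wG_single, wG_single, if_pos (by omega), if_pos (by omega)]; ring
  · have := hterm w0 (-1) 1 ?_ ?_ ?_
    · rw [this]; ring
    · show Phi w0 (Pi.single _ 1 - Pi.single _ 1) = -1
      rw [Phi_sub, w0_single, w0_single, hone, hzero, if_neg (by omega), if_pos rfl]; ring
    · show Phi w0 (Pi.single _ 1 + Pi.single _ 1) = 1
      rw [Phi_add, w0_single, w0_single, hone, hzero, if_neg (by omega), if_pos rfl]; ring
    · intro i' j' hji' hii' hj'
      rw [Phi_sub, w0_single, w0_single, if_neg (by omega), if_neg (by omega)]; ring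

lemma uniq {β : Fin n → ℚ} {d : ℕ} (hn : 2 ≤ n) (hd : (d:ℚ) = Phi wF β)
    (m m' : {α // α ∈ rootsD n} → ℕ)
    (hm1 : (∑ a, m a) = d) (hm2 : (∑ a, (m a : ℚ) • (a : Fin n → ℚ)) = β)
    (hm1' : (∑ a, m' a) = d) (hm2' : (∑ a, (m' a : ℚ) • (a : Fin n → ℚ)) = β) :
    m = m' := by
  have hs := supp_one hd m hm1 hm2
  have hs' := supp_one hd m' hm1' hm2'
  have hAB := eval_AB hn m hm2 hs
  have hAB' := eval_AB hn m' hm2' hs'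
  funext a
  have hQeq : (m a : ℚ) = (m' a : ℚ) → m a = m' a := fun h => by exact_mod_cast h
  apply hQeq
  obtain ⟨i, j, hji, hc | hc⟩ := master a.2
  · by_cases h1 : (i:ℕ) = (j:ℕ)+1
    · by_cases hj : 1 ≤ (j:ℕ)
      · have ha : a = ⟨Pi.single i 1 - Pi.single j 1, mem_sub hji⟩ := Subtype.ext hc
        rw [ha, eval_s m hm2 hs hji h1 hj, eval_s m' hm2' hs' hji h1 hj]
      · have ha : a = finA hn := by
          apply Subtype.ext
          have hi : i = (⟨1, by omega⟩ : Fin n) := Fin.ext (show (i:ℕ) = 1 by omega)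
          have hj : j = (⟨0, by omega⟩ : Fin n) := Fin.ext (show (j:ℕ) = 0 by omega)
          rw [hc, hi, hj]; rfl
        rw [ha]
        have e1 : (m (finA hn) : ℚ) = (Phi (wG 1) β - Phi w0 β) / 2 := by
          rcases hAB with ⟨u1, u2⟩; linarith
        have e2 : (m' (finA hn) : ℚ) = (Phi (wG 1) β - Phi w0 β) / 2 := by
          rcases hAB' with ⟨u1, u2⟩; linarith
        rw [e1, e2]
    · have hΦ : Phi wF a.1 ≠ 1 := by
        rw [hc, Phi_wF_sub]
        have hji' : (j:ℕ) < (i:ℕ) := hji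
        have h2 : (j:ℕ) + 2 ≤ (i:ℕ) := by omega
        have h2' : ((j:ℕ):ℚ) + 2 ≤ ((i:ℕ):ℚ) := by exact_mod_cast h2
        intro he; linarith
      have z1 : m a = 0 := by by_contra h; exact hΦ (hs a h)
      have z2 : m' a = 0 := by by_contra h; exact hΦ (hs' a h)
      rw [z1, z2]
  · by_cases h1 : (i:ℕ) = 1 ∧ (j:ℕ) = 0
    · have ha : a = finB hn := by
        apply Subtype.ext
        have hi : i = (⟨1, by omega⟩ : Fin n) := Fin.ext (show (i:ℕ) = 1 by omega)
        have hj : j = (⟨0, by omega⟩ : Fin n) := Fin.ext (show (j:ℕ) = 0 by omega)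
        rw [hc, hi, hj]; rfl
      rw [ha]
      have e1 : (m (finB hn) : ℚ) = (Phi (wG 1) β + Phi w0 β) / 2 := by
        rcases hAB with ⟨u1, u2⟩; linarith
      have e2 : (m' (finB hn) : ℚ) = (Phi (wG 1) β + Phi w0 β) / 2 := by
        rcases hAB' with ⟨u1, u2⟩; linarith
      rw [e1, e2]
    · have hΦ : Phi wF a.1 ≠ 1 := by
        rw [hc, Phi_wF_add]
        have hji' : (j:ℕ) < (i:ℕ) := hji
        have h2 : 2 ≤ (i:ℕ) + (j:ℕ) := by omega
        have h2' : (2:ℚ) ≤ ((i:ℕ):ℚ) + ((j:ℕ):ℚ) := by exact_mod_cast h2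
        intro he; linarith
      have z1 : m a = 0 := by by_contra h; exact hΦ (hs a h)
      have z2 : m' a = 0 := by by_contra h; exact hΦ (hs' a h)
      rw [z1, z2]

lemma Phi_root_le {α : Fin n → ℚ} (hα : α ∈ rootsD n) : Phi wF α ≤ ((2*n : ℕ) : ℚ) := by
  obtain ⟨i, j, hji, hc | hc⟩ := master hα <;> subst hc
  · rw [Phi_wF_sub]
    have h1 : (i:ℕ) ≤ 2*n := by omega
    have h2 : ((i:ℕ):ℚ) ≤ ((2*n:ℕ):ℚ) := by exact_mod_cast h1
    have h3 : (0:ℚ) ≤ ((j:ℕ):ℚ) := Nat.cast_nonneg _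
    linarith
  · rw [Phi_wF_add]
    have h1 : (i:ℕ) + (j:ℕ) ≤ 2*n := by have := i.2; have := j.2; omega
    have h2 : (((i:ℕ) + (j:ℕ) : ℕ):ℚ) ≤ ((2*n:ℕ):ℚ) := by exact_mod_cast h1
    push_cast at h2 ⊢
    linarith

lemma card_one (hn : 2 ≤ n) {β : Fin n → ℚ} {d : ℕ} (hd : (d:ℚ) = Phi wF β)
    (hex : ∃ m : {α // α ∈ rootsD n} → ℕ, (∑ a, (m a : ℚ) • (a : Fin n → ℚ)) = β) :
    Nat.card {m : {α // α ∈ rootsD n} → ℕ //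
      (∑ a, m a) = d ∧ (∑ a, (m a : ℚ) • (a : Fin n → ℚ)) = β} = 1 := by
  obtain ⟨mw, hmw⟩ := hex
  have hbound : (∑ a, (mw a : ℚ) * (Phi wF a.1 - 1)) ≤ (((∑ a, mw a) * (2*n) : ℕ) : ℚ) := by
    push_cast
    rw [Finset.sum_mul]
    apply Finset.sum_le_sum
    intro a _
    apply mul_le_mul_of_nonneg_left _ (Nat.cast_nonneg _)
    have := Phi_root_le a.2
    push_cast at this
    linarith
  obtain ⟨m', hm'2, hm'supp⟩ := exists_simple _ β mw hmw hbound
  have hm'1 : (∑ a, m' a) = d := by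
    have hq : ((∑ a, m' a : ℕ):ℚ) = (d:ℚ) := by
      push_cast
      calc (∑ a, (m' a:ℚ)) = ∑ a, (m' a:ℚ) * Phi wF a.1 := by
            apply Finset.sum_congr rfl
            intro a _
            by_cases h : m' a = 0
            · simp [h]
            · rw [hm'supp a h, mul_one]
        _ = Phi wF β := by rw [← hm'2, Phi_sum]
        _ = (d:ℚ) := hd.symm
    exact_mod_cast hq
  have hne : Nonempty {m : {α // α ∈ rootsD n} → ℕ //
      (∑ a, m a) = d ∧ (∑ a, (m a : ℚ) • (a : Fin n → ℚ)) = β} := ⟨⟨m', hm'1, hm'2⟩⟩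
  have hsub : Subsingleton {m : {α // α ∈ rootsD n} → ℕ //
      (∑ a, m a) = d ∧ (∑ a, (m a : ℚ) • (a : Fin n → ℚ)) = β} := by
    constructor
    rintro ⟨m1, h11, h12⟩ ⟨m2, h21, h22⟩
    exact Subtype.ext (uniq hn hd m1 m2 h11 h12 h21 h22)
  exact Nat.card_eq_one_iff_unique.2 ⟨hsub, hne⟩
end KDaux


/-- For `λ, μ` dominant of type `D_n` with `λ - μ` a nonnegative
integral combination of positive roots, `K^{D_n}_{λ,μ}(q)` is monic of degree
`∑_{i=2}^n (i-1) (λ_i - μ_i)`. -/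
theorem KD_monic_of_degree (n : ℕ) (hn : 2 ≤ n) (lam mu : Fin n → ℚ)
    (hlam : DominantD lam) (hmu : DominantD mu)
    (hQ : ∃ m : {α // α ∈ rootsD n} → ℕ,
      (∑ α, (m α : ℚ) • (α : Fin n → ℚ)) = lam - mu) :
    ∃ d : ℕ, (d : ℚ) = (∑ i : Fin n, ((i : ℕ) : ℚ) * (lam i - mu i)) ∧
      PowerSeries.coeff d (KD n lam mu) = 1 ∧
      ∀ k : ℕ, d < k → PowerSeries.coeff k (KD n lam mu) = 0 := by
  classical
  obtain ⟨m0, hm0⟩ := hQ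
  have hroot_nat : ∀ a : {α // α ∈ rootsD n}, ∃ c : ℕ, KDaux.Phi KDaux.wF a.1 = (c:ℚ) := by
    intro a
    obtain ⟨i, j, hji, hc | hc⟩ := KDaux.master a.2
    · refine ⟨(i:ℕ) - (j:ℕ), ?_⟩
      rw [hc, KDaux.Phi_wF_sub]
      have hji' : (j:ℕ) ≤ (i:ℕ) := le_of_lt hji
      push_cast [hji']
      ring
    · refine ⟨(i:ℕ) + (j:ℕ), ?_⟩
      rw [hc, KDaux.Phi_wF_add]
      push_cast
      ring
  choose c hc using hroot_nat
  set d : ℕ := ∑ a, m0 a * c a with hdd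
  have hd : ((d : ℕ):ℚ) = KDaux.Phi KDaux.wF (lam - mu) := by
    rw [← hm0, KDaux.Phi_sum, hdd]
    push_cast
    exact Finset.sum_congr rfl (fun a _ => by rw [hc a])
  set v : Fin n → ℚ := lam + rhoD n with hv
  have hlam0 : ∀ j : Fin n, 0 < (j:ℕ) → |lam ⟨0, by omega⟩| ≤ lam j :=
    hlam.2.1 (by omega)
  have hpos : ∀ k : Fin n, 0 < (k:ℕ) → 0 < v k := by
    intro k hk
    have h1 : 0 ≤ lam k := le_trans (abs_nonneg _) (hlam0 k hk)
    have h2 : (1:ℚ) ≤ ((k:ℕ):ℚ) := by exact_mod_cast hk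
    simp only [hv, Pi.add_apply, rhoD]
    linarith
  have habs : StrictMono (fun k : Fin n => |v k|) := by
    intro i j hij
    have hij' : (i:ℕ) < (j:ℕ) := hij
    have hj : 0 < (j:ℕ) := by omega
    have hvj : |v j| = v j := abs_of_pos (hpos j hj)
    have h2 : (1:ℚ) ≤ ((j:ℕ):ℚ) := by exact_mod_cast hj
    simp only []
    rcases Nat.eq_zero_or_pos (i:ℕ) with h0 | h0
    · have hi0 : i = ⟨0, by omega⟩ := Fin.ext h0
      have hvi : |v i| = |lam i| := by
        simp only [hv, Pi.add_apply, rhoD, h0]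
        norm_num
      have hli : |lam i| ≤ lam j := by rw [hi0]; exact hlam0 j hj
      rw [hvi, hvj]
      simp only [hv, Pi.add_apply, rhoD]
      linarith
    · have hvi : |v i| = v i := abs_of_pos (hpos i h0)
      have hlij : lam i ≤ lam j := hlam.1 i j (le_of_lt hij) h0
      have hcast : ((i:ℕ):ℚ) < ((j:ℕ):ℚ) := by exact_mod_cast hij'
      rw [hvi, hvj]
      simp only [hv, Pi.add_apply, rhoD]
      linarith
  have hco : ∀ k : ℕ, PowerSeries.coeff k (KD n lam mu) =
      ∑ σ : Equiv.Perm (Fin n), ∑ ε : Fin n → Bool,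
        if (∏ i, (if ε i then (-1 : ℤ) else 1)) = 1 then
          wDet σ ε * PowerSeries.coeff k
            (kostantQ (rootsD n) (wAct σ ε v - (mu + rhoD n)))
        else 0 := by
    intro k
    rw [KD, map_sum]
    apply Finset.sum_congr rfl; intro σ _
    rw [map_sum]
    apply Finset.sum_congr rfl; intro ε _
    rw [apply_ite (PowerSeries.coeff k), map_zero, map_zsmul, smul_eq_mul]
  have hPhiv : KDaux.Phi KDaux.wF v - KDaux.Phi KDaux.wF (mu + rhoD n) = (d:ℚ) := by
    rw [hd, hv, KDaux.Phi_add, KDaux.Phi_add, KDaux.Phi_sub]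
    ring
  have hterm_le : ∀ (σ : Equiv.Perm (Fin n)) (ε : Fin n → Bool),
      KDaux.Phi KDaux.wF (wAct σ ε v - (mu + rhoD n)) ≤ (d:ℚ) := by
    intro σ ε
    rw [KDaux.Phi_sub]
    have := KDaux.key_le σ ε hpos habs
    linarith
  have hterm_lt : ∀ (σ : Equiv.Perm (Fin n)) (ε : Fin n → Bool),
      (∏ i, (if ε i then (-1 : ℤ) else 1)) = 1 →
      ¬(σ = 1 ∧ ε = fun _ => false) →
      KDaux.Phi KDaux.wF (wAct σ ε v - (mu + rhoD n)) < (d:ℚ) := by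
    intro σ ε hpar hne
    rw [KDaux.Phi_sub]
    have hle := KDaux.key_le σ ε hpos habs
    have hne' : KDaux.Phi KDaux.wF (wAct σ ε v) ≠ KDaux.Phi KDaux.wF v := fun h =>
      hne (KDaux.key_eq σ ε hpos habs (by omega) hpar h)
    have := lt_of_le_of_ne hle hne'
    linarith
  refine ⟨d, ?_, ?_, ?_⟩
  · rw [hd]
    rfl
  · -- coeff d = 1
    rw [hco d]
    rw [Finset.sum_eq_single (1 : Equiv.Perm (Fin n))
      (fun σ _ hσne => Finset.sum_eq_zero (fun ε _ => by
        by_cases hpar : (∏ i, (if ε i then (-1 : ℤ) else 1)) = 1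
        · rw [if_pos hpar,
            KDaux.coeff_kostantQ_eq_zero (hterm_lt σ ε hpar
              (fun hcon => hσne hcon.1))]
          ring
        · rw [if_neg hpar]))
      (fun h => absurd (Finset.mem_univ _) h)]
    rw [Finset.sum_eq_single (fun _ : Fin n => false)
      (fun ε _ hεne => by
        by_cases hpar : (∏ i, (if ε i then (-1 : ℤ) else 1)) = 1
        · rw [if_pos hpar,
            KDaux.coeff_kostantQ_eq_zero (hterm_lt 1 ε hpar
              (fun hcon => hεne hcon.2))]
          ring
        · rw [if_neg hpar])
      (fun h => absurd (Finset.mem_univ _) h)]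
    rw [if_pos (by simp)]
    have hwd : wDet (1 : Equiv.Perm (Fin n)) (fun _ => false) = 1 := by simp [wDet]
    rw [hwd, one_mul]
    have hact : wAct (1 : Equiv.Perm (Fin n)) (fun _ => false) v = v := by
      funext i; simp [wAct]
    rw [hact]
    have hvmu : v - (mu + rhoD n) = lam - mu := by
      funext i
      simp only [hv, Pi.sub_apply, Pi.add_apply]
      ring
    rw [hvmu, kostantQ, PowerSeries.coeff_mk,
      KDaux.card_one hn hd ⟨m0, hm0⟩]
    norm_num
  · intro k hk
    rw [hco k]
    apply Finset.sum_eq_zero; intro σ _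
    apply Finset.sum_eq_zero; intro ε _
    by_cases hpar : (∏ i, (if ε i then (-1 : ℤ) else 1)) = 1
    · rw [if_pos hpar,
        KDaux.coeff_kostantQ_eq_zero
          (lt_of_le_of_lt (hterm_le σ ε) (by exact_mod_cast hk))]
      ring
    · rw [if_neg hpar]
end

section
/- Let n ≥ 2 and let λ, μ ∈ ℤ^n with λ_n ≥ … ≥ λ_1 ≥ 0 and μ_n ≥ … ≥ μ_1 ≥ 0, and suppose Σ_{i=1}^n λ_i = Σ_{i=1}^n μ_i. Then K^{B_n}_{λ,μ}(q) = K^{C_n}_{λ,μ}(q) = K^{D_n}_{λ,μ}(q) = K^{A_{n−1}}_{λ,μ}(q). -/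
open scoped BigOperators

lemma rootsA_subset_rootsD (n : ℕ) : rootsA n ⊆ rootsD n := Finset.subset_union_left
lemma rootsA_subset_rootsB (n : ℕ) : rootsA n ⊆ rootsB n :=
  (rootsA_subset_rootsD n).trans Finset.subset_union_left
lemma rootsA_subset_rootsC (n : ℕ) : rootsA n ⊆ rootsC n :=
  (rootsA_subset_rootsD n).trans Finset.subset_union_left

lemma sum_rootsA {n : ℕ} {α : Fin n → ℚ} (h : α ∈ rootsA n) : ∑ i, α i = 0 := by
  obtain ⟨p, -, rfl⟩ := Finset.mem_image.mp h
  simp [Finset.sum_sub_distrib]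

lemma sum_rootsD {n : ℕ} {α : Fin n → ℚ} (h : α ∈ rootsD n) :
    (0 ≤ ∑ i, α i) ∧ ((∑ i, α i) = 0 → α ∈ rootsA n) := by
  rcases Finset.mem_union.mp h with h | h
  · exact ⟨le_of_eq (sum_rootsA h).symm, fun _ => h⟩
  · obtain ⟨p, -, rfl⟩ := Finset.mem_image.mp h
    constructor
    · simp [Finset.sum_add_distrib]
    · intro hc; exfalso
      simp only [Pi.add_apply, Finset.sum_add_distrib] at hc
      simp at hc

lemma sum_rootsB {n : ℕ} {α : Fin n → ℚ} (h : α ∈ rootsB n) :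
    (0 ≤ ∑ i, α i) ∧ ((∑ i, α i) = 0 → α ∈ rootsA n) := by
  rcases Finset.mem_union.mp h with h | h
  · exact sum_rootsD h
  · obtain ⟨i, -, rfl⟩ := Finset.mem_image.mp h
    refine ⟨by simp, fun hc => ?_⟩
    simp at hc

lemma sum_rootsC {n : ℕ} {α : Fin n → ℚ} (h : α ∈ rootsC n) :
    (0 ≤ ∑ i, α i) ∧ ((∑ i, α i) = 0 → α ∈ rootsA n) := by
  rcases Finset.mem_union.mp h with h | h
  · exact sum_rootsD h
  · obtain ⟨i, -, rfl⟩ := Finset.mem_image.mp h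
    refine ⟨by simp, fun hc => ?_⟩
    simp at hc

lemma sum_coords_solution {n : ℕ} {R : Finset (Fin n → ℚ)} {β : Fin n → ℚ}
    (m : {α // α ∈ R} → ℕ) (hm : (∑ α, (m α : ℚ) • (α : Fin n → ℚ)) = β) :
    ∑ α : {α // α ∈ R}, (m α : ℚ) * (∑ i, (α : Fin n → ℚ) i) = ∑ i, β i := by
  have := congrArg (fun f => ∑ i, f i) hm
  rw [← this]
  simp only [Finset.sum_apply, Pi.smul_apply, smul_eq_mul, Finset.mul_sum]
  rw [Finset.sum_comm]

/-- if `m` vanishes off `S ⊆ R`, sums over `R` restrict to sums over `S`. -/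
lemma sum_restrict {n : ℕ} {R S : Finset (Fin n → ℚ)} (hSR : S ⊆ R)
    {M : Type} [AddCommMonoid M] (F : (Fin n → ℚ) → ℕ → M) (hF : ∀ α, F α 0 = 0)
    (m : {α // α ∈ R} → ℕ) (hm : ∀ α : {α // α ∈ R}, α.1 ∉ S → m α = 0) :
    ∑ α : {α // α ∈ R}, F α.1 (m α) = ∑ α : {α // α ∈ S}, F α.1 (m ⟨α.1, hSR α.2⟩) := by
  classical
  have h1 : ∑ a ∈ R, (fun a => if h : a ∈ R then F a (m ⟨a, h⟩) else 0) a
      = ∑ α : {α // α ∈ R}, F α.1 (m α) := by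
    rw [Finset.sum_subtype R (fun _ => Iff.rfl)]
    exact Finset.sum_congr rfl fun α _ => dif_pos α.2
  have h2 : ∑ a ∈ S, (fun a => if h : a ∈ S then F a (m ⟨a, hSR h⟩) else 0) a
      = ∑ α : {α // α ∈ S}, F α.1 (m ⟨α.1, hSR α.2⟩) := by
    rw [Finset.sum_subtype S (fun _ => Iff.rfl)]
    exact Finset.sum_congr rfl fun α _ => dif_pos α.2
  rw [← h1, ← h2]
  have step1 : ∑ a ∈ R, (fun a => if h : a ∈ R then F a (m ⟨a, h⟩) else 0) a
      = ∑ a ∈ R, (fun a => if h : a ∈ S then F a (m ⟨a, hSR h⟩) else 0) a := by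
    refine Finset.sum_congr rfl fun a haR => ?_
    dsimp only
    by_cases hs : a ∈ S
    · rw [dif_pos haR, dif_pos hs]
    · rw [dif_pos haR, dif_neg hs, hm ⟨a, haR⟩ hs, hF]
  have step2 : ∑ a ∈ S, (fun a => if h : a ∈ S then F a (m ⟨a, hSR h⟩) else 0) a
      = ∑ a ∈ R, (fun a => if h : a ∈ S then F a (m ⟨a, hSR h⟩) else 0) a := by
    refine Finset.sum_subset hSR fun a haR haS => ?_
    rw [dif_neg haS]
  rw [step1, step2]

lemma solution_vanish {n : ℕ} {R S : Finset (Fin n → ℚ)} {β : Fin n → ℚ}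
    (hR : ∀ α ∈ R, 0 ≤ ∑ i, α i) (hS0 : ∀ α ∈ R, (∑ i, α i) = 0 → α ∈ S)
    (hβ : ∑ i, β i = 0)
    (m : {α // α ∈ R} → ℕ) (hm : (∑ α, (m α : ℚ) • (α : Fin n → ℚ)) = β) :
    ∀ α : {α // α ∈ R}, α.1 ∉ S → m α = 0 := by
  have h := sum_coords_solution m hm
  rw [hβ] at h
  have hz := (Finset.sum_eq_zero_iff_of_nonneg (fun α _ =>
    mul_nonneg (by positivity) (hR α.1 α.2))).mp h
  intro α hα
  by_contra hne
  have hpos : 0 < ∑ i, (α : Fin n → ℚ) i :=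
    lt_of_le_of_ne (hR α.1 α.2) fun hc => hα (hS0 α.1 α.2 hc.symm)
  have := hz α (Finset.mem_univ α)
  have : (m α : ℚ) = 0 := by
    rcases mul_eq_zero.mp this with h' | h'
    · exact h'
    · exact absurd h' (ne_of_gt hpos)
  exact hne (by exact_mod_cast this)

lemma kostantQ_subset_eq {n : ℕ} {R S : Finset (Fin n → ℚ)} (hSR : S ⊆ R)
    (hR : ∀ α ∈ R, 0 ≤ ∑ i, α i) (hS0 : ∀ α ∈ R, (∑ i, α i) = 0 → α ∈ S)
    {β : Fin n → ℚ} (hβ : ∑ i, β i = 0) :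
    kostantQ R β = kostantQ S β := by
  classical
  ext k
  simp only [kostantQ, PowerSeries.coeff_mk]
  congr 1
  apply Nat.card_congr
  refine ⟨fun m => ⟨fun α => m.1 ⟨α.1, hSR α.2⟩, ?_, ?_⟩,
    fun m => ⟨fun α => if h : α.1 ∈ S then m.1 ⟨α.1, h⟩ else 0, ?_, ?_⟩, ?_, ?_⟩
  · have hv := solution_vanish hR hS0 hβ m.1 m.2.2
    rw [← sum_restrict hSR (fun _ k => k) (fun _ => rfl) m.1 hv]
    exact m.2.1
  · have hv := solution_vanish hR hS0 hβ m.1 m.2.2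
    rw [← sum_restrict hSR (fun α k => (k : ℚ) • α) (fun α => by simp) m.1 hv]
    exact m.2.2
  · set me : {α // α ∈ R} → ℕ := fun α => if h : α.1 ∈ S then m.1 ⟨α.1, h⟩ else 0 with hme
    have hv : ∀ α : {α // α ∈ R}, α.1 ∉ S → me α = 0 := fun α hα => dif_neg hα
    rw [sum_restrict hSR (fun _ k => k) (fun _ => rfl) me hv]
    rw [← m.2.1]
    exact Finset.sum_congr rfl fun α _ => dif_pos α.2
  · set me : {α // α ∈ R} → ℕ := fun α => if h : α.1 ∈ S then m.1 ⟨α.1, h⟩ else 0 with hme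
    have hv : ∀ α : {α // α ∈ R}, α.1 ∉ S → me α = 0 := fun α hα => dif_neg hα
    rw [sum_restrict hSR (fun α k => (k : ℚ) • α) (fun α => by simp) me hv]
    rw [← m.2.2]
    refine Finset.sum_congr rfl fun α _ => ?_
    rw [show me ⟨α.1, hSR α.2⟩ = m.1 α from dif_pos α.2]
  · intro m
    apply Subtype.ext
    funext α
    have hv := solution_vanish hR hS0 hβ m.1 m.2.2
    by_cases hs : α.1 ∈ S
    · exact dif_pos hs
    · simpa [dif_neg hs] using (hv α hs).symm
  · intro m
    apply Subtype.ext
    funext α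
    exact dif_pos α.2

lemma kostantQ_eq_zero {n : ℕ} {R : Finset (Fin n → ℚ)} {β : Fin n → ℚ}
    (hR : ∀ α ∈ R, 0 ≤ ∑ i, α i) (hβ : ∑ i, β i < 0) :
    kostantQ R β = 0 := by
  ext k
  simp only [kostantQ, PowerSeries.coeff_mk, map_zero]
  have : IsEmpty {m : {α // α ∈ R} → ℕ //
      (∑ α, m α) = k ∧ (∑ α, (m α : ℚ) • (α : Fin n → ℚ)) = β} := by
    constructor
    rintro ⟨m, -, hm⟩
    have h := sum_coords_solution m hm
    have h2 : (0:ℚ) ≤ ∑ α : {α // α ∈ R}, (m α : ℚ) * (∑ i, (α : Fin n → ℚ) i) :=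
      Finset.sum_nonneg fun α _ => mul_nonneg (by positivity) (hR α.1 α.2)
    linarith
  rw [Nat.card_of_isEmpty]
  norm_num

lemma sum_wAct_lt {n : ℕ} (σ : Equiv.Perm (Fin n)) (ε : Fin n → Bool) (v : Fin n → ℚ)
    (hv : ∀ i, 0 ≤ v i) (i₀ : Fin n) (h0 : ε i₀ = true) (hpos : 0 < v (σ⁻¹ i₀)) :
    ∑ i, wAct σ ε v i < ∑ i, v i := by
  have h1 : ∑ i, v (σ⁻¹ i) = ∑ i, v i := Equiv.sum_comp σ⁻¹ v
  rw [← h1]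
  refine Finset.sum_lt_sum (fun i _ => ?_) ⟨i₀, Finset.mem_univ _, ?_⟩
  · unfold wAct
    split
    · linarith [hv (σ⁻¹ i)]
    · linarith
  · unfold wAct
    rw [h0]
    simp only [if_true]
    linarith

lemma wAct_false {n : ℕ} (σ : Equiv.Perm (Fin n)) (v : Fin n → ℚ) :
    wAct σ (fun _ => false) v = fun i => v (σ⁻¹ i) := by
  funext i; simp [wAct]

lemma wDet_false {n : ℕ} (σ : Equiv.Perm (Fin n)) :
    wDet σ (fun _ => false) = (Equiv.Perm.sign σ : ℤ) := by
  simp [wDet]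

lemma exists_true_of_ne {n : ℕ} {ε : Fin n → Bool} (h : ε ≠ fun _ => false) :
    ∃ i, ε i = true := by
  obtain ⟨i, hi⟩ := Function.ne_iff.mp h
  exact ⟨i, by simpa using hi⟩

lemma exists_two_trues {n : ℕ} {ε : Fin n → Bool} (hne : ε ≠ fun _ => false)
    (hev : (∏ i, if ε i then (-1:ℤ) else 1) = 1) :
    ∃ i j, i ≠ j ∧ ε i = true ∧ ε j = true := by
  classical
  set T := Finset.univ.filter fun i => ε i = true with hT
  have hprod : (∏ i, if ε i then (-1:ℤ) else 1) = (-1) ^ T.card := by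
    rw [Finset.prod_ite]
    simp [hT]
  rw [hprod] at hev
  have heven : Even T.card := (neg_one_pow_eq_one_iff_even (by norm_num)).mp hev
  obtain ⟨i, hi⟩ := exists_true_of_ne hne
  have hiT : i ∈ T := by simp [hT, hi]
  have h1 : 1 ≤ T.card := Finset.card_pos.mpr ⟨i, hiT⟩
  have h2 : 1 < T.card := by
    obtain ⟨r, hr⟩ := heven
    omega
  obtain ⟨a, ha, b, hb, hab⟩ := Finset.one_lt_card.mp h2
  exact ⟨a, b, hab, (Finset.mem_filter.mp ha).2, (Finset.mem_filter.mp hb).2⟩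

lemma sum_beta_eq {n : ℕ} (σ : Equiv.Perm (Fin n)) (v w : Fin n → ℚ)
    (hvw : ∑ i, v i = ∑ i, w i) :
    ∑ i, ((fun i => v (σ⁻¹ i)) - w) i = 0 := by
  simp only [Pi.sub_apply, Finset.sum_sub_distrib]
  rw [Equiv.sum_comp σ⁻¹ v, hvw, sub_self]

lemma inner_sum_pos {n : ℕ} (R : Finset (Fin n → ℚ))
    (hR : ∀ α ∈ R, 0 ≤ ∑ i, α i) (hRA : ∀ α ∈ R, (∑ i, α i) = 0 → α ∈ rootsA n)
    (hAR : rootsA n ⊆ R)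
    (ρX : Fin n → ℚ) (c : ℚ) (hρ : ∀ i, ρX i = rhoA n i + c)
    (L M : Fin n → ℚ) (hsum : ∑ i, L i = ∑ i, M i)
    (hv : ∀ i, 0 < L i + ρX i)
    (σ : Equiv.Perm (Fin n)) :
    ∑ ε : Fin n → Bool, wDet σ ε • kostantQ R (wAct σ ε (L + ρX) - (M + ρX)) =
      (Equiv.Perm.sign σ : ℤ) •
        kostantQ (rootsA n) ((fun i => (L + rhoA n) (σ⁻¹ i)) - (M + rhoA n)) := by
  have hVW : ∑ i, (L + ρX) i = ∑ i, (M + ρX) i := by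
    simp only [Pi.add_apply, Finset.sum_add_distrib, hsum]
  rw [Fintype.sum_eq_single (fun _ => false) ?_]
  · rw [wDet_false, wAct_false]
    congr 1
    have hb0 : ∑ i, ((fun i => (L + ρX) (σ⁻¹ i)) - (M + ρX)) i = 0 :=
      sum_beta_eq σ _ _ hVW
    rw [kostantQ_subset_eq hAR hR hRA hb0]
    have harg : (fun i => (L + ρX) (σ⁻¹ i)) - (M + ρX)
        = (fun i => (L + rhoA n) (σ⁻¹ i)) - (M + rhoA n) := by
      funext i
      simp only [Pi.sub_apply, Pi.add_apply, hρ]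
      ring
    rw [harg]
  · intro ε hne
    obtain ⟨i₀, hi₀⟩ := exists_true_of_ne hne
    have hlt : ∑ i, wAct σ ε (L + ρX) i < ∑ i, (L + ρX) i :=
      sum_wAct_lt σ ε _ (fun i => le_of_lt (hv i)) i₀ hi₀ (hv _)
    have hneg : ∑ i, (wAct σ ε (L + ρX) - (M + ρX)) i < 0 := by
      simp only [Pi.sub_apply, Finset.sum_sub_distrib]
      linarith [hVW]
    rw [kostantQ_eq_zero hR hneg, smul_zero]

lemma inner_sum_D {n : ℕ} (L M : Fin n → ℚ) (hsum : ∑ i, L i = ∑ i, M i)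
    (hv0 : ∀ i, 0 ≤ L i + rhoD n i)
    (hv1 : ∀ i : Fin n, 0 < (i : ℕ) → 0 < L i + rhoD n i)
    (σ : Equiv.Perm (Fin n)) :
    (∑ ε : Fin n → Bool,
      if (∏ i, (if ε i then (-1 : ℤ) else 1)) = 1 then
        wDet σ ε • kostantQ (rootsD n) (wAct σ ε (L + rhoD n) - (M + rhoD n))
      else 0) =
      (Equiv.Perm.sign σ : ℤ) •
        kostantQ (rootsA n) ((fun i => (L + rhoA n) (σ⁻¹ i)) - (M + rhoA n)) := by
  have hVW : ∑ i, (L + rhoD n) i = ∑ i, (M + rhoD n) i := by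
    simp only [Pi.add_apply, Finset.sum_add_distrib, hsum]
  rw [Fintype.sum_eq_single (fun _ => false) ?_]
  · rw [if_pos (by simp), wDet_false, wAct_false]
    congr 1
    have hb0 := sum_beta_eq σ _ _ hVW
    rw [kostantQ_subset_eq (rootsA_subset_rootsD n) (fun α h => (sum_rootsD h).1)
      (fun α h => (sum_rootsD h).2) hb0]
    rfl
  · intro ε hne
    by_cases hprod : (∏ i, (if ε i then (-1 : ℤ) else 1)) = 1
    · rw [if_pos hprod]
      obtain ⟨i, j, hij, hi, hj⟩ := exists_two_trues hne hprod
      have hinj : σ⁻¹ i ≠ σ⁻¹ j := fun h => hij (by simpa using congrArg σ h)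
      obtain ⟨i₀, hi₀t, hi₀p⟩ : ∃ i₀, ε i₀ = true ∧ 0 < (L + rhoD n) (σ⁻¹ i₀) := by
        by_cases hz : 0 < ((σ⁻¹ i : Fin n) : ℕ)
        · exact ⟨i, hi, hv1 _ hz⟩
        · refine ⟨j, hj, hv1 _ ?_⟩
          have h0i : ((σ⁻¹ i : Fin n) : ℕ) = 0 := by omega
          rcases Nat.eq_zero_or_pos ((σ⁻¹ j : Fin n) : ℕ) with h0 | h0
          · exact absurd (Fin.ext (h0i.trans h0.symm)) hinj
          · exact h0
      have hlt : ∑ k, wAct σ ε (L + rhoD n) k < ∑ k, (L + rhoD n) k :=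
        sum_wAct_lt σ ε _ hv0 i₀ hi₀t hi₀p
      have hneg : ∑ k, (wAct σ ε (L + rhoD n) - (M + rhoD n)) k < 0 := by
        simp only [Pi.sub_apply, Finset.sum_sub_distrib]
        linarith [hVW]
      rw [kostantQ_eq_zero (fun α h => (sum_rootsD h).1) hneg, smul_zero]
    · rw [if_neg hprod]


/-- For partitions `λ, μ` of the same size, the Kostka-Foulkes
polynomials of types `B_n`, `C_n`, `D_n` and `A_{n-1}` all coincide. -/
theorem K_eq_of_same_size (n : ℕ) (hn : 2 ≤ n) (lam mu : Fin n → ℤ)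
    (hlam : Monotone lam) (hlam0 : ∀ i, 0 ≤ lam i)
    (hmu : Monotone mu) (hmu0 : ∀ i, 0 ≤ mu i)
    (hsum : ∑ i, lam i = ∑ i, mu i) :
    KB n (fun i => (lam i : ℚ)) (fun i => (mu i : ℚ)) =
        KC n (fun i => (lam i : ℚ)) (fun i => (mu i : ℚ)) ∧
    KC n (fun i => (lam i : ℚ)) (fun i => (mu i : ℚ)) =
        KD n (fun i => (lam i : ℚ)) (fun i => (mu i : ℚ)) ∧
    KD n (fun i => (lam i : ℚ)) (fun i => (mu i : ℚ)) =
        KA n (fun i => (lam i : ℚ)) (fun i => (mu i : ℚ)) := by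
  set L : Fin n → ℚ := fun i => (lam i : ℚ) with hL
  set M : Fin n → ℚ := fun i => (mu i : ℚ) with hM
  have hsumQ : ∑ i, L i = ∑ i, M i := by
    rw [hL, hM]
    push_cast
    exact_mod_cast congrArg (fun z : ℤ => (z : ℚ)) hsum
  have hL0 : ∀ i, (0:ℚ) ≤ L i := fun i => by
    show (0:ℚ) ≤ ((lam i : ℤ) : ℚ)
    exact_mod_cast hlam0 i
  have hKB : KB n L M = KA n L M := by
    unfold KB KA
    refine Finset.sum_congr rfl fun σ _ => ?_
    refine inner_sum_pos (rootsB n) (fun α h => (sum_rootsB h).1)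
      (fun α h => (sum_rootsB h).2) (rootsA_subset_rootsB n) (rhoB n) (1/2)
      (fun i => rfl) L M hsumQ (fun i => ?_) σ
    have h2 : (0:ℚ) ≤ ((i : ℕ) : ℚ) := Nat.cast_nonneg _
    have := hL0 i
    show (0:ℚ) < L i + (((i : ℕ) : ℚ) + 1/2)
    linarith
  have hKC : KC n L M = KA n L M := by
    unfold KC KA
    refine Finset.sum_congr rfl fun σ _ => ?_
    refine inner_sum_pos (rootsC n) (fun α h => (sum_rootsC h).1)
      (fun α h => (sum_rootsC h).2) (rootsA_subset_rootsC n) (rhoC n) 1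
      (fun i => rfl) L M hsumQ (fun i => ?_) σ
    have h2 : (0:ℚ) ≤ ((i : ℕ) : ℚ) := Nat.cast_nonneg _
    have := hL0 i
    show (0:ℚ) < L i + (((i : ℕ) : ℚ) + 1)
    linarith
  have hKD : KD n L M = KA n L M := by
    unfold KD KA
    refine Finset.sum_congr rfl fun σ _ => ?_
    refine inner_sum_D L M hsumQ (fun i => ?_) (fun i hi => ?_) σ
    · have h2 : (0:ℚ) ≤ ((i : ℕ) : ℚ) := Nat.cast_nonneg _
      have := hL0 i
      show (0:ℚ) ≤ L i + ((i : ℕ) : ℚ)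
      linarith
    · have h2 : (1:ℚ) ≤ ((i : ℕ) : ℚ) := by exact_mod_cast hi
      have := hL0 i
      show (0:ℚ) < L i + ((i : ℕ) : ℚ)
      linarith
  exact ⟨hKB.trans hKC.symm, hKC.trans hKD.symm, hKD⟩
end
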